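/- arXiv:2308.14382 — 14 statements merged into one kernel-verified Lean document; each statement's English description precedes it below -/
import Mathlib

section
/- For positive integers r, s and m, n, the partial fraction decomposition 1/(m^r n^s) = \sum_{h+p=r+s, h,p\ge 1} ( binom(p-1, r-1)/(n^h (m+n)^p) + binom(p-1, s-1)/(m^h (m+n)^p) ) holds (as an identity of rational numbers, or of real numbers for m, n > 0). -/
open Finset

/-- Sum form with shifted indices: represents the RHS for `r = u+1`, `s = v+1`. -/
noncomputable def pfdS (a b : ℝ) (u v : ℕ) : ℝ :=
  ∑ i ∈ Finset.range (u + v + 1),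
    ((Nat.choose i u : ℝ) / (b ^ (u + v + 1 - i) * (a + b) ^ (i + 1))
      + (Nat.choose i v : ℝ) / (a ^ (u + v + 1 - i) * (a + b) ^ (i + 1)))

lemma pfdS_swap (a b : ℝ) (u v : ℕ) : pfdS a b u v = pfdS b a v u := by
  unfold pfdS
  rw [show v + u = u + v from add_comm v u, show b + a = a + b from add_comm b a]
  exact Finset.sum_congr rfl fun i _ => add_comm _ _

lemma pfd_base (a b : ℝ) (ha : a ≠ 0) (hb : b ≠ 0) (hc : a + b ≠ 0) :
    ∀ v : ℕ, (a * b ^ (v + 1))⁻¹ = pfdS a b 0 v := by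
  intro v
  induction v with
  | zero =>
    simp only [pfdS, Finset.sum_range_one, Nat.choose_self, Nat.cast_one]
    norm_num
    field_simp
  | succ v ih =>
    have key : pfdS a b 0 (v + 1) = (a + b)⁻¹ * pfdS a b 0 v + (b ^ (v + 2) * (a + b))⁻¹ := by
      unfold pfdS
      rw [show 0 + (v + 1) + 1 = (0 + v + 1) + 1 from by omega, Finset.sum_range_succ']
      have h0 : ((Nat.choose 0 0 : ℝ) / (b ^ (0 + v + 1 + 1 - 0) * (a + b) ^ (0 + 1))
          + (Nat.choose 0 (v + 1) : ℝ) / (a ^ (0 + v + 1 + 1 - 0) * (a + b) ^ (0 + 1)))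
          = (b ^ (v + 2) * (a + b))⁻¹ := by
        simp [Nat.choose]
      rw [h0, Finset.mul_sum]
      congr 1
      apply Finset.sum_congr rfl
      intro i hi
      have hiv : i ≤ v := by simpa [Nat.lt_succ_iff] using Finset.mem_range.mp hi
      rw [show 0 + v + 1 + 1 - (i + 1) = 0 + v + 1 - i from by omega,
        Nat.choose_succ_succ i v, Nat.choose_eq_zero_of_lt (show i < v + 1 from by omega)]
      push_cast
      rw [Nat.choose_zero_right]
      have hbp : b ^ (0 + v + 1 - i) ≠ 0 := pow_ne_zero _ hb
      have hap : a ^ (0 + v + 1 - i) ≠ 0 := pow_ne_zero _ ha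
      have hcp : (a + b) ^ (i + 1) ≠ 0 := pow_ne_zero _ hc
      field_simp
      simp only [Nat.choose_zero_right, Nat.cast_one]
      ring
    rw [key, ← ih]
    field_simp
    ring

lemma pfd_main (a b : ℝ) (ha : a ≠ 0) (hb : b ≠ 0) (hc : a + b ≠ 0) :
    ∀ u v : ℕ, (a ^ (u + 1) * b ^ (v + 1))⁻¹ = pfdS a b u v := by
  intro u
  induction u with
  | zero =>
    intro v
    rw [← pfd_base a b ha hb hc v]
    norm_num
  | succ u ihu =>
    intro v
    induction v with
    | zero =>
      rw [pfdS_swap, ← pfd_base b a hb ha (by rwa [add_comm]) (u + 1)]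
      rw [mul_comm]
      norm_num
    | succ v ihv =>
      have key : pfdS a b (u + 1) (v + 1)
          = (a + b)⁻¹ * (pfdS a b u (v + 1) + pfdS a b (u + 1) v) := by
        unfold pfdS
        rw [show u + 1 + (v + 1) + 1 = (u + (v + 1) + 1) + 1 from by omega,
          Finset.sum_range_succ']
        have h0 : ((Nat.choose 0 (u + 1) : ℝ) / (b ^ (u + (v+1) + 1 + 1 - 0) * (a + b) ^ (0 + 1))
            + (Nat.choose 0 (v + 1) : ℝ) / (a ^ (u + (v+1) + 1 + 1 - 0) * (a + b) ^ (0 + 1)))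
            = 0 := by
          simp [Nat.choose]
        rw [h0, add_zero, show u + 1 + v = u + (v + 1) from by omega,
          ← Finset.sum_add_distrib, Finset.mul_sum]
        apply Finset.sum_congr rfl
        intro i hi
        have hiv : i ≤ u + v + 1 := by
          have := Finset.mem_range.mp hi; omega
        rw [show u + (v + 1) + 1 + 1 - (i + 1) = u + (v + 1) + 1 - i from by omega,
          Nat.choose_succ_succ i u, Nat.choose_succ_succ i v]
        push_cast
        have hbp : b ^ (u + (v + 1) + 1 - i) ≠ 0 := pow_ne_zero _ hb
        have hap : a ^ (u + (v + 1) + 1 - i) ≠ 0 := pow_ne_zero _ ha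
        have hcp : (a + b) ^ (i + 1) ≠ 0 := pow_ne_zero _ hc
        field_simp
        ring
      rw [key, ← ihu (v + 1), ← ihv]
      field_simp
      ring

/-- Partial fraction decomposition:
`1/(m^r n^s) = ∑_{h+p=r+s, h,p ≥ 1} ( C(p-1,r-1)/(n^h (m+n)^p) + C(p-1,s-1)/(m^h (m+n)^p) )`,
where the sum is parametrized by `p ∈ [1, r+s-1]` and `h = r+s-p`. -/
theorem partial_fraction_decomposition (r s m n : ℕ)
    (hr : 1 ≤ r) (hs : 1 ≤ s) (hm : 1 ≤ m) (hn : 1 ≤ n) :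
    ((m : ℝ) ^ r * (n : ℝ) ^ s)⁻¹ =
      ∑ p ∈ Finset.Icc 1 (r + s - 1),
        ((Nat.choose (p - 1) (r - 1) : ℝ) / ((n : ℝ) ^ (r + s - p) * ((m : ℝ) + (n : ℝ)) ^ p)
          + (Nat.choose (p - 1) (s - 1) : ℝ) / ((m : ℝ) ^ (r + s - p) * ((m : ℝ) + (n : ℝ)) ^ p)) := by
  obtain ⟨u, rfl⟩ : ∃ u, r = u + 1 := ⟨r - 1, by omega⟩
  obtain ⟨v, rfl⟩ : ∃ v, s = v + 1 := ⟨s - 1, by omega⟩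
  have ha : (m : ℝ) ≠ 0 := by positivity
  have hb : (n : ℝ) ≠ 0 := by positivity
  have hc : (m : ℝ) + n ≠ 0 := by positivity
  rw [pfd_main (m : ℝ) (n : ℝ) ha hb hc u v, pfdS]
  rw [show u + 1 + (v + 1) - 1 = u + v + 1 from by omega, ← Finset.Ico_add_one_right_eq_Icc,
    Finset.sum_Ico_eq_sum_range]
  apply Finset.sum_congr (by congr 1)
  intro i hi
  have hiv : i < u + v + 1 := by
    have := Finset.mem_range.mp hi
    omega
  rw [show 1 + i - 1 = i from by omega, show u + 1 - 1 = u from by omega,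
    show v + 1 - 1 = v from by omega,
    show u + 1 + (v + 1) - (1 + i) = u + v + 1 - i from by omega,
    show 1 + i = i + 1 from by omega]
end

section
/- For integers r, s \ge 2, the double shuffle relation holds: \zeta(r,s) + \zeta(s,r) + \zeta(r+s) = \sum_{h+p=r+s, h,p\ge 1} ( binom(p-1, r-1) + binom(p-1, s-1) ) \zeta(h,p), where terms \zeta(h,1) do not occur since the binomial coefficients vanish unless p \ge min(r,s) \ge 2. -/
open Finset

section PartialFraction

lemma pf_base {x y : ℝ} (hx : x ≠ 0) (hy : y ≠ 0) (hxy : x + y ≠ 0) :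
    (x * y)⁻¹ = (y * (x + y))⁻¹ + (x * (x + y))⁻¹ := by
  field_simp

lemma pf_rec {x y : ℝ} (hx : x ≠ 0) (hy : y ≠ 0) (hxy : x + y ≠ 0) (r s : ℕ) :
    (x ^ (r+1) * y ^ (s+1))⁻¹ =
      (x + y)⁻¹ * ((x ^ r * y ^ (s+1))⁻¹ + (x ^ (r+1) * y ^ s)⁻¹) := by
  field_simp
  ring

lemma pf0 {x y : ℝ} (hx : x ≠ 0) (hy : y ≠ 0) (hxy : x + y ≠ 0) (s : ℕ) :
    (x * y ^ (s+1))⁻¹ =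
      ∑ p ∈ range (s+1), (y ^ (s+1-p) * (x+y) ^ (p+1))⁻¹ + (x * (x+y) ^ (s+1))⁻¹ := by
  induction s with
  | zero => simpa using pf_base hx hy hxy
  | succ s ih =>
    have h1 := pf_rec hx hy hxy 0 (s+1)
    simp only [zero_add, pow_one] at h1
    rw [h1, ih]
    conv_rhs => rw [Finset.sum_range_succ']
    have e0 : ∀ p ∈ range (s+1), (y ^ (s+1+1-(p+1)) * (x+y) ^ (p+1+1))⁻¹
        = (x+y)⁻¹ * (y ^ (s+1-p) * (x+y) ^ (p+1))⁻¹ := by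
      intro p _
      rw [Nat.succ_sub_succ, pow_succ]
      rw [mul_inv, mul_inv, mul_inv]
      ring
    rw [Finset.sum_congr rfl e0, ← Finset.mul_sum]
    generalize (∑ p ∈ range (s+1), (y ^ (s+1-p) * (x+y) ^ (p+1))⁻¹) = S
    simp only [Nat.sub_zero, pow_zero, one_mul]
    field_simp
    ring

lemma pf_left {x y : ℝ} (hx : x ≠ 0) (hy : y ≠ 0) (hxy : x + y ≠ 0) (s : ℕ) :
    (x ^ (0+1) * y ^ (s+1))⁻¹ = ∑ p ∈ range (0+s+1),
      ((p.choose 0 : ℝ) * (y ^ (0+s+1-p) * (x+y) ^ (p+1))⁻¹ +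
       (p.choose s : ℝ) * (x ^ (0+s+1-p) * (x+y) ^ (p+1))⁻¹) := by
  simp only [zero_add, pow_one, Nat.choose_zero_right, Nat.cast_one, one_mul]
  rw [Finset.sum_add_distrib]
  have h2 : ∑ p ∈ range (s+1), (p.choose s : ℝ) * (x ^ (s+1-p) * (x+y) ^ (p+1))⁻¹
      = (x * (x+y) ^ (s+1))⁻¹ := by
    rw [Finset.sum_eq_single_of_mem s (Finset.self_mem_range_succ s)]
    · simp
    · intro p hp hps
      have : p.choose s = 0 := Nat.choose_eq_zero_of_lt (by
        simp only [Finset.mem_range] at hp; omega)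
      simp [this]
  rw [h2]
  exact pf0 hx hy hxy s

lemma pf_right {x y : ℝ} (hx : x ≠ 0) (hy : y ≠ 0) (hxy : x + y ≠ 0) (r : ℕ) :
    (x ^ (r+1) * y ^ (0+1))⁻¹ = ∑ p ∈ range (r+0+1),
      ((p.choose r : ℝ) * (y ^ (r+0+1-p) * (x+y) ^ (p+1))⁻¹ +
       (p.choose 0 : ℝ) * (x ^ (r+0+1-p) * (x+y) ^ (p+1))⁻¹) := by
  simp only [Nat.add_zero, zero_add, pow_one, Nat.choose_zero_right, Nat.cast_one, one_mul]
  rw [Finset.sum_add_distrib]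
  have h2 : ∑ p ∈ range (r+1), (p.choose r : ℝ) * (y ^ (r+1-p) * (x+y) ^ (p+1))⁻¹
      = (y * (x+y) ^ (r+1))⁻¹ := by
    rw [Finset.sum_eq_single_of_mem r (Finset.self_mem_range_succ r)]
    · simp
    · intro p hp hps
      have : p.choose r = 0 := Nat.choose_eq_zero_of_lt (by
        simp only [Finset.mem_range] at hp; omega)
      simp [this]
  rw [h2]
  have h3 := pf0 hy hx (by rwa [add_comm]) r
  rw [show y + x = x + y from add_comm y x] at h3
  rw [show x ^ (r+1) * y = y * x ^ (r+1) from mul_comm _ _, h3]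
  ring

lemma pf {x y : ℝ} (hx : x ≠ 0) (hy : y ≠ 0) (hxy : x + y ≠ 0) :
    ∀ (n r s : ℕ), r + s = n →
    (x ^ (r+1) * y ^ (s+1))⁻¹ = ∑ p ∈ range (r+s+1),
      ((p.choose r : ℝ) * (y ^ (r+s+1-p) * (x+y) ^ (p+1))⁻¹ +
       (p.choose s : ℝ) * (x ^ (r+s+1-p) * (x+y) ^ (p+1))⁻¹) := by
  intro n
  induction n with
  | zero =>
    intro r s h
    obtain ⟨rfl, rfl⟩ : r = 0 ∧ s = 0 := by omega
    exact pf_left hx hy hxy 0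
  | succ n ih =>
    intro r s h
    match r, s with
    | 0, s => exact pf_left hx hy hxy s
    | r+1, 0 => exact pf_right hx hy hxy (r+1)
    | a+1, b+1 =>
      have ih1 := ih a (b+1) (by omega)
      have ih2 := ih (a+1) b (by omega)
      simp only [show a+1+b+1 = a+b+2 from by omega] at ih2
      simp only [show a+(b+1)+1 = a+b+2 from by omega] at ih1
      rw [pf_rec hx hy hxy (a+1) (b+1), ih1, ih2, ← Finset.sum_add_distrib,
        Finset.mul_sum]
      simp only [show a+1+(b+1)+1 = a+b+3 from by omega]
      conv_rhs => rw [Finset.sum_range_succ']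
      have hz1 : (Nat.choose 0 (a+1) : ℝ) = 0 := by
        simp [Nat.choose_eq_zero_of_lt (Nat.succ_pos a)]
      have hz2 : (Nat.choose 0 (b+1) : ℝ) = 0 := by
        simp [Nat.choose_eq_zero_of_lt (Nat.succ_pos b)]
      rw [hz1, hz2, zero_mul, zero_mul, add_zero, add_zero]
      refine Finset.sum_congr rfl fun p hp => ?_
      have e1 : a+b+3-(p+1) = a+b+2-p := by omega
      rw [Nat.choose_succ_succ p a, Nat.choose_succ_succ p b, e1]
      push_cast
      simp only [mul_inv, ← inv_pow]
      ring

end PartialFraction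

/-- The double zeta value `ζ(r,s) = ∑_{0<m₁<m₂} m₁⁻ʳ m₂⁻ˢ`. -/
noncomputable def dzeta (r s : ℕ) : ℝ :=
  ∑' p : ℕ × ℕ, if 0 < p.1 ∧ p.1 < p.2 then ((p.1 : ℝ) ^ r * (p.2 : ℝ) ^ s)⁻¹ else 0

/-- The single zeta value `ζ(k) = ∑_{m>0} m⁻ᵏ`. -/
noncomputable def szeta (k : ℕ) : ℝ :=
  ∑' n : ℕ, if 0 < n then ((n : ℝ) ^ k)⁻¹ else 0

section Analytic

/-- summand of the double zeta value -/
noncomputable def dterm (h p : ℕ) (q : ℕ × ℕ) : ℝ :=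
  if 0 < q.1 ∧ q.1 < q.2 then ((q.1 : ℝ) ^ h * (q.2 : ℝ) ^ p)⁻¹ else 0

lemma dzeta_eq (h p : ℕ) : dzeta h p = ∑' q : ℕ × ℕ, dterm h p q := rfl

lemma dterm_nonneg (h p : ℕ) (q : ℕ × ℕ) : 0 ≤ dterm h p q := by
  unfold dterm
  split <;> positivity

lemma szeta_eq {k : ℕ} (hk : 1 ≤ k) : szeta k = ∑' n : ℕ, ((n : ℝ) ^ k)⁻¹ := by
  unfold szeta
  refine tsum_congr fun n => ?_
  rcases Nat.eq_zero_or_pos n with rfl | hn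
  · simp [zero_pow (by omega : k ≠ 0)]
  · simp [hn]

lemma summable_szeta {k : ℕ} (hk : 2 ≤ k) : Summable (fun n : ℕ => ((n : ℝ) ^ k)⁻¹) :=
  Real.summable_nat_pow_inv.mpr (by omega)

set_option maxHeartbeats 1600000 in
lemma summable_sq : Summable (fun q : ℕ × ℕ => ((q.1 : ℝ) ^ 2)⁻¹ * ((q.2 : ℝ) ^ 2)⁻¹) := by
  have h2 : Summable (fun n : ℕ => ((n : ℝ) ^ 2)⁻¹) := summable_szeta le_rfl
  have hf' : (0 : ℕ → ℝ) ≤ fun n : ℕ => ((n : ℝ) ^ 2)⁻¹ := fun n => by positivity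
  exact Summable.mul_of_nonneg h2 h2 hf' hf'

lemma key_ineq {m n h p : ℕ} (hm : 0 < m) (hmn : m ≤ n) (hh : 1 ≤ h) (hp : 2 ≤ p)
    (h4 : 4 ≤ h + p) : m ^ 2 * n ^ 2 ≤ m ^ h * n ^ p := by
  have hn : 0 < n := hm.trans_le hmn
  rcases Nat.lt_or_ge h 2 with h1 | h2
  · have hh1 : h = 1 := by omega
    subst hh1
    calc m ^ 2 * n ^ 2 = m * (m * n ^ 2) := by ring
      _ ≤ m * (n * n ^ 2) := Nat.mul_le_mul le_rfl (Nat.mul_le_mul hmn le_rfl)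
      _ = m ^ 1 * n ^ 3 := by ring
      _ ≤ m ^ 1 * n ^ p := Nat.mul_le_mul le_rfl (Nat.pow_le_pow_right hn (by omega))
  · exact Nat.mul_le_mul (Nat.pow_le_pow_right hm h2) (Nat.pow_le_pow_right hn hp)

lemma summable_dterm {h p : ℕ} (hh : 1 ≤ h) (hp : 2 ≤ p) (h4 : 4 ≤ h + p) :
    Summable (dterm h p) := by
  refine Summable.of_nonneg_of_le (dterm_nonneg h p) (fun q => ?_) summable_sq
  rcases q with ⟨m, n⟩
  unfold dterm
  by_cases hc : 0 < m ∧ m < n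
  · rw [if_pos hc, ← mul_inv]
    have hm : (0:ℝ) < (m:ℝ) := by exact_mod_cast hc.1
    have hn : (0:ℝ) < (n:ℝ) := by
      have := hc.1.trans hc.2
      exact_mod_cast this
    refine inv_anti₀ (by positivity) ?_
    exact_mod_cast key_ineq hc.1 hc.2.le hh hp h4
  · rw [if_neg hc]
    positivity

lemma injective_diag : Function.Injective (fun n : ℕ => ((n, n) : ℕ × ℕ)) := by
  intro a b h
  simpa using congrArg Prod.fst h

lemma injective_iy : Function.Injective (fun q : ℕ × ℕ => ((q.2, q.1 + q.2) : ℕ × ℕ)) := by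
  rintro ⟨a, b⟩ ⟨c, d⟩ h
  simp only [Prod.mk.injEq] at h
  obtain ⟨h1, h2⟩ := h
  simp only [Prod.mk.injEq]
  omega

lemma injective_ix : Function.Injective (fun q : ℕ × ℕ => ((q.1, q.1 + q.2) : ℕ × ℕ)) := by
  rintro ⟨a, b⟩ ⟨c, d⟩ h
  simp only [Prod.mk.injEq] at h
  obtain ⟨h1, h2⟩ := h
  simp only [Prod.mk.injEq]
  omega

lemma tsum_iy (h p : ℕ) :
    ∑' q : ℕ × ℕ, dterm h p (q.2, q.1 + q.2) = dzeta h p := by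
  rw [dzeta_eq]
  refine Function.Injective.tsum_eq injective_iy fun q hq => ?_
  obtain ⟨a, b⟩ := q
  have hcond : 0 < a ∧ a < b := by
    by_contra hc
    exact hq (by simp [dterm, hc])
  refine Set.mem_range.mpr ⟨(b - a, a), ?_⟩
  show ((a : ℕ), b - a + a) = (a, b)
  rw [Nat.sub_add_cancel hcond.2.le]

lemma tsum_ix (h p : ℕ) :
    ∑' q : ℕ × ℕ, dterm h p (q.1, q.1 + q.2) = dzeta h p := by
  rw [dzeta_eq]
  refine Function.Injective.tsum_eq injective_ix fun q hq => ?_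
  obtain ⟨a, b⟩ := q
  have hcond : 0 < a ∧ a < b := by
    by_contra hc
    exact hq (by simp [dterm, hc])
  refine Set.mem_range.mpr ⟨(a, b - a), ?_⟩
  show ((a : ℕ), a + (b - a)) = (a, b)
  rw [Nat.add_sub_cancel' hcond.2.le]

lemma summable_coef (c : ℕ) (f : ℕ × ℕ → ℝ) (h : c ≠ 0 → Summable f) :
    Summable (fun q => (c : ℝ) * f q) := by
  by_cases hc : c = 0
  · simp only [hc, Nat.cast_zero, zero_mul]
    exact summable_zero
  · exact ((h hc).mul_left _)

/-- diagonal summand -/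
noncomputable def diagTerm (r s : ℕ) (q : ℕ × ℕ) : ℝ :=
  if 0 < q.1 ∧ q.1 = q.2 then ((q.1 : ℝ) ^ r * (q.2 : ℝ) ^ s)⁻¹ else 0

lemma diagTerm_comp (r s : ℕ) (n : ℕ) :
    diagTerm r s (n, n) = (if 0 < n then ((n : ℝ) ^ (r + s))⁻¹ else 0) := by
  unfold diagTerm
  rcases Nat.eq_zero_or_pos n with rfl | hn
  · simp
  · simp [hn, pow_add]

lemma diagTerm_support (r s : ℕ) :
    Function.support (diagTerm r s) ⊆ Set.range (fun n : ℕ => ((n, n) : ℕ × ℕ)) := by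
  intro q hq
  have hcond : 0 < q.1 ∧ q.1 = q.2 := by
    by_contra hc
    exact hq (by simp [diagTerm, hc])
  exact ⟨q.1, by ext <;> simp [hcond.2]⟩

lemma summable_diagTerm (r s : ℕ) (hr : 1 ≤ r) (hs : 1 ≤ s) :
    Summable (diagTerm r s) := by
  rw [← Function.Injective.summable_iff injective_diag (fun q hq => ?_)]
  · apply Summable.congr (f := fun n : ℕ => if 0 < n then ((n : ℝ) ^ (r + s))⁻¹ else 0)
    · refine Summable.of_nonneg_of_le (fun n => ?_) (fun n => ?_)
        (summable_szeta (k := r + s) (by omega))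
      · split <;> positivity
      · split
        · exact le_rfl
        · positivity
    · intro n
      exact (diagTerm_comp r s n).symm
  · by_contra hne
    exact hq (diagTerm_support r s (by simpa using hne))

lemma tsum_diagTerm (r s : ℕ) (hr : 1 ≤ r) (hs : 1 ≤ s) :
    ∑' q : ℕ × ℕ, diagTerm r s q = szeta (r + s) := by
  rw [← Function.Injective.tsum_eq injective_diag (diagTerm_support r s)]
  unfold szeta
  exact tsum_congr fun n => diagTerm_comp r s n

set_option maxHeartbeats 1600000 in
lemma tsum_P (r s : ℕ) (hr : 2 ≤ r) (hs : 2 ≤ s) :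
    ∑' q : ℕ × ℕ, ((q.1 : ℝ) ^ r)⁻¹ * ((q.2 : ℝ) ^ s)⁻¹ = szeta r * szeta s := by
  have h1 : Summable (fun n : ℕ => ((n : ℝ) ^ r)⁻¹) := summable_szeta hr
  have h2 : Summable (fun n : ℕ => ((n : ℝ) ^ s)⁻¹) := summable_szeta hs
  have hf' : (0 : ℕ → ℝ) ≤ fun n : ℕ => ((n : ℝ) ^ r)⁻¹ := fun n => by positivity
  have hg' : (0 : ℕ → ℝ) ≤ fun n : ℕ => ((n : ℝ) ^ s)⁻¹ := fun n => by positivity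
  have hP : Summable (fun q : ℕ × ℕ => ((q.1 : ℝ) ^ r)⁻¹ * ((q.2 : ℝ) ^ s)⁻¹) :=
    Summable.mul_of_nonneg h1 h2 hf' hg'
  rw [szeta_eq (by omega : 1 ≤ r), szeta_eq (by omega : 1 ≤ s)]
  rw [Summable.tsum_prod hP]
  rw [← tsum_mul_right]
  refine tsum_congr fun m => ?_
  show ∑' n : ℕ, ((m : ℝ) ^ r)⁻¹ * ((n : ℝ) ^ s)⁻¹ = _
  exact tsum_mul_left

set_option maxHeartbeats 1600000 in
lemma summable_P (r s : ℕ) (hr : 2 ≤ r) (hs : 2 ≤ s) :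
    Summable (fun q : ℕ × ℕ => ((q.1 : ℝ) ^ r)⁻¹ * ((q.2 : ℝ) ^ s)⁻¹) := by
  have h1 : Summable (fun n : ℕ => ((n : ℝ) ^ r)⁻¹) := summable_szeta hr
  have h2 : Summable (fun n : ℕ => ((n : ℝ) ^ s)⁻¹) := summable_szeta hs
  have hf' : (0 : ℕ → ℝ) ≤ fun n : ℕ => ((n : ℝ) ^ r)⁻¹ := fun n => by positivity
  have hg' : (0 : ℕ → ℝ) ≤ fun n : ℕ => ((n : ℝ) ^ s)⁻¹ := fun n => by positivity
  exact Summable.mul_of_nonneg h1 h2 hf' hg'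

lemma stuffle (r s : ℕ) (hr : 2 ≤ r) (hs : 2 ≤ s) :
    szeta r * szeta s = dzeta r s + dzeta s r + szeta (r + s) := by
  have hpt : ∀ q : ℕ × ℕ, ((q.1 : ℝ) ^ r)⁻¹ * ((q.2 : ℝ) ^ s)⁻¹ =
      (dterm r s q + dterm s r q.swap) + diagTerm r s q := by
    rintro ⟨m, n⟩
    rcases Nat.eq_zero_or_pos m with rfl | hm
    · simp [dterm, diagTerm, zero_pow (by omega : r ≠ 0)]
    rcases Nat.eq_zero_or_pos n with rfl | hn
    · simp [dterm, diagTerm, zero_pow (by omega : s ≠ 0), hm.ne']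
    rcases lt_trichotomy m n with hlt | heq | hgt
    · have c2 : ¬ (0 < n ∧ n < m) := by omega
      have c3 : ¬ (0 < m ∧ m = n) := by omega
      simp only [dterm, diagTerm, Prod.swap_prod_mk]
      rw [if_pos ⟨hm, hlt⟩, if_neg c2, if_neg c3, mul_inv]
      ring
    · subst heq
      have c1 : ¬ (0 < m ∧ m < m) := by omega
      simp only [dterm, diagTerm, Prod.swap_prod_mk]
      rw [if_neg c1, if_neg c1]
      have hcond : 0 < m ∧ True := ⟨hm, trivial⟩
      rw [if_pos hcond, mul_inv]
      ring
    · have c1 : ¬ (0 < m ∧ m < n) := by omega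
      have c3 : ¬ (0 < m ∧ m = n) := by omega
      simp only [dterm, diagTerm, Prod.swap_prod_mk]
      rw [if_neg c1, if_pos ⟨hn, hgt⟩, if_neg c3, mul_inv]
      ring
  have S1 : Summable (dterm r s) := summable_dterm (by omega) hs (by omega)
  have S2 : Summable (fun q : ℕ × ℕ => dterm s r q.swap) :=
    (summable_dterm (by omega) hr (by omega)).prod_symm
  have S3 : Summable (diagTerm r s) := summable_diagTerm r s (by omega) (by omega)
  calc szeta r * szeta s
      = ∑' q : ℕ × ℕ, ((q.1 : ℝ) ^ r)⁻¹ * ((q.2 : ℝ) ^ s)⁻¹ := (tsum_P r s hr hs).symm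
    _ = ∑' q : ℕ × ℕ, ((dterm r s q + dterm s r q.swap) + diagTerm r s q) :=
        tsum_congr hpt
    _ = (∑' q : ℕ × ℕ, (dterm r s q + dterm s r q.swap)) + ∑' q, diagTerm r s q :=
        Summable.tsum_add (S1.add S2) S3
    _ = ((∑' q : ℕ × ℕ, dterm r s q) + ∑' q : ℕ × ℕ, dterm s r q.swap)
          + ∑' q, diagTerm r s q := by rw [Summable.tsum_add S1 S2]
    _ = dzeta r s + dzeta s r + szeta (r + s) := by
        rw [← dzeta_eq, tsum_diagTerm r s (by omega) (by omega)]
        congr 2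
        exact (Equiv.prodComm ℕ ℕ).tsum_eq (dterm s r)

lemma choose_pos_of_ne {b p : ℕ} (hb : 2 ≤ b) (h1 : 1 ≤ p) (hc : (p-1).choose (b-1) ≠ 0) :
    2 ≤ p := by
  have hle : b - 1 ≤ p - 1 := not_lt.mp (fun h => hc (Nat.choose_eq_zero_of_lt h))
  omega

lemma dterm_eval {h p a b : ℕ} (hab : 0 < a ∧ a < b) :
    dterm h p (a, b) = ((a : ℝ) ^ h * (b : ℝ) ^ p)⁻¹ := if_pos hab

lemma shuffle (r s : ℕ) (hr : 2 ≤ r) (hs : 2 ≤ s) :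
    szeta r * szeta s =
      ∑ p ∈ Finset.Icc 1 (r + s - 1),
        ((Nat.choose (p - 1) (r - 1) + Nat.choose (p - 1) (s - 1) : ℕ) : ℝ) *
          dzeta (r + s - p) p := by
  have hsumd : ∀ p ∈ Finset.Icc 1 (r + s - 1), 2 ≤ p → Summable (dterm (r + s - p) p) := by
    intro p hp hp2
    simp only [Finset.mem_Icc] at hp
    exact summable_dterm (by omega) hp2 (by omega)
  have hGy : ∀ p ∈ Finset.Icc 1 (r + s - 1),
      Summable (fun q : ℕ × ℕ =>
        (((p-1).choose (r-1) : ℕ) : ℝ) * dterm (r+s-p) p (q.2, q.1+q.2)) := by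
    intro p hp
    refine summable_coef _ _ fun hc => ?_
    have hp1 : 1 ≤ p := (Finset.mem_Icc.mp hp).1
    exact ((hsumd p hp (choose_pos_of_ne hr hp1 hc)).comp_injective injective_iy)
  have hGx : ∀ p ∈ Finset.Icc 1 (r + s - 1),
      Summable (fun q : ℕ × ℕ =>
        (((p-1).choose (s-1) : ℕ) : ℝ) * dterm (r+s-p) p (q.1, q.1+q.2)) := by
    intro p hp
    refine summable_coef _ _ fun hc => ?_
    have hp1 : 1 ≤ p := (Finset.mem_Icc.mp hp).1
    exact ((hsumd p hp (choose_pos_of_ne hs hp1 hc)).comp_injective injective_ix)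
  have hpt : ∀ (m n : ℕ), ((m : ℝ) ^ r)⁻¹ * ((n : ℝ) ^ s)⁻¹ =
      ∑ p ∈ Finset.Icc 1 (r + s - 1),
        ((((p-1).choose (r-1) : ℕ) : ℝ) * dterm (r+s-p) p (n, m+n) +
         (((p-1).choose (s-1) : ℕ) : ℝ) * dterm (r+s-p) p (m, m+n)) := by
    intro m n
    rcases Nat.eq_zero_or_pos m with rfl | hm
    · rw [Nat.cast_zero, zero_pow (by omega : r ≠ 0), inv_zero, zero_mul]
      refine (Finset.sum_eq_zero fun p _ => ?_).symm
      simp [dterm]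
    rcases Nat.eq_zero_or_pos n with rfl | hn
    · rw [Nat.cast_zero, zero_pow (by omega : s ≠ 0), inv_zero, mul_zero]
      refine (Finset.sum_eq_zero fun p _ => ?_).symm
      simp [dterm]
    have hx : (m:ℝ) ≠ 0 := Nat.cast_ne_zero.mpr hm.ne'
    have hy : (n:ℝ) ≠ 0 := Nat.cast_ne_zero.mpr hn.ne'
    have hxy : (m:ℝ) + (n:ℝ) ≠ 0 := by
      have h1 : (0:ℝ) < (m:ℝ) := by exact_mod_cast hm
      have h2 : (0:ℝ) ≤ (n:ℝ) := Nat.cast_nonneg n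
      linarith
    have hpf := pf hx hy hxy ((r-1)+(s-1)) (r-1) (s-1) rfl
    simp only [show r-1+1 = r from by omega, show s-1+1 = s from by omega,
      show r-1+(s-1)+1 = r+s-1 from by omega] at hpf
    rw [← mul_inv, hpf, ← Finset.Ico_add_one_right_eq_Icc, Finset.sum_Ico_eq_sum_range]
    simp only [show r+s-1+1-1 = r+s-1 from by omega]
    refine Finset.sum_congr rfl fun i hi => ?_
    have himem : i < r+s-1 := Finset.mem_range.mp hi
    have hc1 : 0 < n ∧ n < m + n := ⟨hn, by omega⟩
    have hc2 : 0 < m ∧ m < m + n := ⟨hm, by omega⟩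
    rw [dterm_eval hc1, dterm_eval hc2]
    simp only [show (1:ℕ)+i-1 = i from by omega, show r+s-(1+i) = r+s-1-i from by omega]
    push_cast
    ring
  calc szeta r * szeta s
      = ∑' q : ℕ × ℕ, ((q.1 : ℝ) ^ r)⁻¹ * ((q.2 : ℝ) ^ s)⁻¹ := (tsum_P r s hr hs).symm
    _ = ∑' q : ℕ × ℕ, ∑ p ∈ Finset.Icc 1 (r + s - 1),
          ((((p-1).choose (r-1) : ℕ) : ℝ) * dterm (r+s-p) p (q.2, q.1+q.2) +
           (((p-1).choose (s-1) : ℕ) : ℝ) * dterm (r+s-p) p (q.1, q.1+q.2)) :=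
        tsum_congr fun q => hpt q.1 q.2
    _ = ∑ p ∈ Finset.Icc 1 (r + s - 1), ∑' q : ℕ × ℕ,
          ((((p-1).choose (r-1) : ℕ) : ℝ) * dterm (r+s-p) p (q.2, q.1+q.2) +
           (((p-1).choose (s-1) : ℕ) : ℝ) * dterm (r+s-p) p (q.1, q.1+q.2)) :=
        Summable.tsum_finsetSum (fun p hp => (hGy p hp).add (hGx p hp))
    _ = ∑ p ∈ Finset.Icc 1 (r + s - 1),
          ((((p-1).choose (r-1) : ℕ) : ℝ) * dzeta (r+s-p) p +
           (((p-1).choose (s-1) : ℕ) : ℝ) * dzeta (r+s-p) p) := by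
        refine Finset.sum_congr rfl fun p hp => ?_
        rw [Summable.tsum_add (hGy p hp) (hGx p hp), tsum_mul_left, tsum_mul_left,
          tsum_iy, tsum_ix]
    _ = ∑ p ∈ Finset.Icc 1 (r + s - 1),
          ((Nat.choose (p - 1) (r - 1) + Nat.choose (p - 1) (s - 1) : ℕ) : ℝ) *
            dzeta (r + s - p) p := by
        refine Finset.sum_congr rfl fun p hp => ?_
        push_cast
        ring

end Analytic

/-- The double shuffle relation for double zeta values:
`ζ(r,s) + ζ(s,r) + ζ(r+s) = ∑_{h+p=r+s, h,p≥1} (C(p-1,r-1) + C(p-1,s-1)) ζ(h,p)`. -/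
theorem double_shuffle_relation (r s : ℕ) (hr : 2 ≤ r) (hs : 2 ≤ s) :
    dzeta r s + dzeta s r + szeta (r + s) =
      ∑ p ∈ Finset.Icc 1 (r + s - 1),
        ((Nat.choose (p - 1) (r - 1) + Nat.choose (p - 1) (s - 1) : ℕ) : ℝ) *
          dzeta (r + s - p) p := by
  rw [← stuffle r s hr hs]
  exact shuffle r s hr hs
end

section
/- For every integer r \ge 2, Euler's sum formula holds: \zeta(r+1) = \sum_{p=2}^{r} \zeta(r+1-p, p). -/
open Finset Filter

/-- Harmonic number `H_m = ∑_{j=1}^m 1/j`. -/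
noncomputable def Hh (m : ℕ) : ℝ := ∑ j ∈ Finset.range m, ((j : ℝ) + 1)⁻¹

lemma summable_ksqrt : Summable (fun k : ℕ => ((k : ℝ) * Real.sqrt k)⁻¹) := by
  have h : ∀ k : ℕ, ((k : ℝ) * Real.sqrt k)⁻¹ = (((k : ℝ)) ^ ((3:ℝ)/2))⁻¹ := by
    intro k
    rcases Nat.eq_zero_or_pos k with hk | hk
    · subst hk; simp
    · have hk' : (0:ℝ) < k := by exact_mod_cast hk
      rw [show (3:ℝ)/2 = 1 + 1/2 by norm_num, Real.rpow_add hk', Real.rpow_one,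
        ← Real.sqrt_eq_rpow]
  simpa only [h] using (Real.summable_nat_rpow_inv.2 (by norm_num : (1:ℝ) < 3/2))

lemma summable_K : Summable (fun q : ℕ × ℕ =>
    ((q.1 : ℝ) * Real.sqrt q.1)⁻¹ * ((q.2 : ℝ) * Real.sqrt q.2)⁻¹) :=
  summable_ksqrt.mul_of_nonneg summable_ksqrt
    (fun k => by positivity) (fun k => by positivity)

lemma key_bound {m d : ℕ} (hm : 0 < m) (hd : 0 < d) :
    (m : ℝ) * Real.sqrt m * ((d : ℝ) * Real.sqrt d) ≤ (m : ℝ) * d * ((m : ℝ) + d) := by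
  have hm' : (0:ℝ) < m := by exact_mod_cast hm
  have hd' : (0:ℝ) < d := by exact_mod_cast hd
  have h1 : Real.sqrt m ≤ Real.sqrt ((m:ℝ) + d) := Real.sqrt_le_sqrt (by linarith)
  have h2 : Real.sqrt d ≤ Real.sqrt ((m:ℝ) + d) := Real.sqrt_le_sqrt (by linarith)
  have h3 : Real.sqrt ((m:ℝ) + d) * Real.sqrt ((m:ℝ) + d) = (m:ℝ) + d :=
    Real.mul_self_sqrt (by positivity)
  have h4 : (0:ℝ) ≤ Real.sqrt m := Real.sqrt_nonneg _
  have h5 : (0:ℝ) ≤ Real.sqrt d := Real.sqrt_nonneg _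
  calc (m : ℝ) * Real.sqrt m * ((d : ℝ) * Real.sqrt d)
      = (m : ℝ) * d * (Real.sqrt m * Real.sqrt d) := by ring
    _ ≤ (m : ℝ) * d * (Real.sqrt ((m:ℝ)+d) * Real.sqrt ((m:ℝ)+d)) := by
        have h6 : Real.sqrt m * Real.sqrt d ≤ Real.sqrt ((m:ℝ)+d) * Real.sqrt ((m:ℝ)+d) :=
          mul_le_mul h1 h2 h5 (Real.sqrt_nonneg _)
        have h7 : (0:ℝ) ≤ (m:ℝ) * d := by positivity
        nlinarith
    _ = (m : ℝ) * d * ((m:ℝ) + d) := by rw [h3]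

lemma inv_le_K {m d : ℕ} (hm : 0 < m) (hd : 0 < d) {D : ℝ}
    (hD : (m : ℝ) * d * ((m : ℝ) + d) ≤ D) :
    D⁻¹ ≤ ((m : ℝ) * Real.sqrt m)⁻¹ * ((d : ℝ) * Real.sqrt d)⁻¹ := by
  have hm' : (0:ℝ) < m := by exact_mod_cast hm
  have hd' : (0:ℝ) < d := by exact_mod_cast hd
  have hms : (0:ℝ) < Real.sqrt m := Real.sqrt_pos.2 hm'
  have hds : (0:ℝ) < Real.sqrt d := Real.sqrt_pos.2 hd'
  rw [← mul_inv]
  exact inv_anti₀ (by positivity) (le_trans (key_bound hm hd) hD)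

/-- The generic summand after reindexing `(m₁, m₂) = (m, m + d)`. -/
noncomputable def gP (a b : ℕ) (q : ℕ × ℕ) : ℝ :=
  if 0 < q.1 ∧ 0 < q.2 then ((q.1 : ℝ) ^ a * ((q.1 : ℝ) + q.2) ^ b)⁻¹ else 0

lemma gP_nonneg (a b : ℕ) (q : ℕ × ℕ) : 0 ≤ gP a b q := by
  unfold gP
  split_ifs with h
  · positivity
  · exact le_rfl

lemma summable_gP {a b : ℕ} (ha : 1 ≤ a) (hb : 2 ≤ b) : Summable (gP a b) := by
  apply Summable.of_nonneg_of_le (gP_nonneg a b) _ summable_K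
  intro q
  obtain ⟨m, d⟩ := q
  unfold gP
  dsimp only
  split_ifs with h
  · obtain ⟨hm, hd⟩ := h
    apply inv_le_K hm hd
    have hm1 : (1:ℝ) ≤ m := by exact_mod_cast hm
    have hd1 : (1:ℝ) ≤ d := by exact_mod_cast hd
    have hy1 : (1:ℝ) ≤ (m:ℝ) + d := by linarith
    have h1 : (m:ℝ) ≤ (m:ℝ) ^ a := le_self_pow₀ hm1 (by omega)
    have h2 : ((m:ℝ) + d) ^ 2 ≤ ((m:ℝ) + d) ^ b := pow_le_pow_right₀ hy1 hb
    calc (m : ℝ) * d * ((m : ℝ) + d) ≤ (m:ℝ) * ((m:ℝ) + d) ^ 2 := by nlinarith [mul_nonneg (mul_nonneg (le_trans zero_le_one hm1) (le_trans zero_le_one hm1)) (le_trans zero_le_one hy1)]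
      _ ≤ (m:ℝ) ^ a * ((m:ℝ) + d) ^ b := mul_le_mul h1 h2 (by positivity) (by positivity)
  · have hm0 : (0:ℝ) ≤ (m:ℝ) * Real.sqrt m := by positivity
    have hd0 : (0:ℝ) ≤ (d:ℝ) * Real.sqrt d := by positivity
    positivity

/-- Reindexing the double zeta sum via `(m, d) ↦ (m, m + d)`. -/
lemma dzeta_eq_s2 (a b : ℕ) : dzeta a b = ∑' q : ℕ × ℕ, gP a b q := by
  unfold dzeta
  have hinj : Function.Injective (fun q : ℕ × ℕ => (q.1, q.1 + q.2)) := by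
    rintro ⟨a1, a2⟩ ⟨b1, b2⟩ h
    simp only [Prod.mk.injEq] at h ⊢
    omega
  rw [← hinj.tsum_eq]
  · apply tsum_congr
    rintro ⟨m, d⟩
    simp only [gP]
    have hcond : (0 < m ∧ m < m + d) ↔ (0 < m ∧ 0 < d) := by omega
    by_cases h : 0 < m ∧ 0 < d
    · rw [if_pos (hcond.2 h), if_pos h]
      push_cast
      ring_nf
    · rw [if_neg (fun hc => h (hcond.1 hc)), if_neg h]
  · intro p hp
    rcases p with ⟨p1, p2⟩
    simp only [Function.support, Set.mem_setOf_eq, ne_eq] at hp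
    have hlt : p1 < p2 := by
      by_contra hc
      exact hp (if_neg (fun hand => hc hand.2))
    refine ⟨(p1, p2 - p1), ?_⟩
    have hadd : p1 + (p2 - p1) = p2 := by omega
    simp [hadd]

/-- The telescoping sum `∑_{d ≥ 0} (1/(d+c) - 1/(d+c+1)) = 1/c`. -/
lemma hasSum_tele (c : ℝ) (hc : 0 < c) :
    HasSum (fun d : ℕ => ((d : ℝ) + c)⁻¹ - ((d : ℝ) + c + 1)⁻¹) c⁻¹ := by
  have hnn : ∀ d : ℕ, 0 ≤ ((d : ℝ) + c)⁻¹ - ((d : ℝ) + c + 1)⁻¹ := by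
    intro d
    have h0 : (0:ℝ) < (d : ℝ) + c := by positivity
    have h1 : ((d : ℝ) + c + 1)⁻¹ ≤ ((d : ℝ) + c)⁻¹ := inv_anti₀ h0 (by linarith)
    linarith
  rw [hasSum_iff_tendsto_nat_of_nonneg hnn]
  have hps : ∀ n : ℕ, ∑ d ∈ Finset.range n, (((d : ℝ) + c)⁻¹ - ((d : ℝ) + c + 1)⁻¹)
      = c⁻¹ - ((n : ℝ) + c)⁻¹ := by
    intro n
    have h := Finset.sum_range_sub' (f := fun d : ℕ => ((d : ℝ) + c)⁻¹) n
    push_cast at h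
    rw [show c⁻¹ - ((n:ℝ) + c)⁻¹ = ((0:ℝ) + c)⁻¹ - ((n:ℝ) + c)⁻¹ by norm_num, ← h]
    apply Finset.sum_congr rfl
    intro d _
    ring_nf
  simp only [hps]
  have h2 : Tendsto (fun n : ℕ => ((n : ℝ) + c)⁻¹) atTop (nhds 0) := by
    apply Tendsto.inv_tendsto_atTop
    exact tendsto_atTop_add_const_right atTop c tendsto_natCast_atTop_atTop
  simpa using tendsto_const_nhds.sub h2

/-- Inner sum for the A-part: `∑_{d ≥ 1} (1/d - 1/(d+m)) = H_m`. -/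
lemma hasSum_innerA (m : ℕ) (hm : 0 < m) :
    HasSum (fun d : ℕ => if 0 < d then ((d : ℝ)⁻¹ - ((d : ℝ) + m)⁻¹) else 0) (Hh m) := by
  have key : ∀ j : ℕ, HasSum
      (fun d : ℕ => if 0 < d then (((d : ℝ) + j)⁻¹ - ((d : ℝ) + j + 1)⁻¹) else 0)
      ((j : ℝ) + 1)⁻¹ := by
    intro j
    have h := hasSum_tele ((j : ℝ) + 1) (by positivity)
    have heq : (fun d : ℕ =>
        (if 0 < d + 1 then (((d : ℝ) + 1 + j)⁻¹ - ((d : ℝ) + 1 + j + 1)⁻¹) else 0))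
        = (fun d : ℕ => ((d : ℝ) + ((j : ℝ) + 1))⁻¹ - ((d : ℝ) + ((j : ℝ) + 1) + 1)⁻¹) := by
      funext d
      rw [if_pos (Nat.succ_pos d)]
      ring_nf
    have h2 : HasSum (fun d : ℕ =>
        (fun d : ℕ => if 0 < d then (((d : ℝ) + j)⁻¹ - ((d : ℝ) + j + 1)⁻¹) else 0) (d + 1))
        (((j : ℝ) + 1)⁻¹) := by
      simp only [Nat.cast_add, Nat.cast_one]
      rw [heq]
      exact h
    have h3 := (hasSum_nat_add_iff (f := fun d : ℕ =>
      if 0 < d then (((d : ℝ) + j)⁻¹ - ((d : ℝ) + j + 1)⁻¹) else 0) 1).1 h2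
    simpa using h3
  have hsum : HasSum (fun d : ℕ => ∑ j ∈ Finset.range m,
      if 0 < d then (((d : ℝ) + j)⁻¹ - ((d : ℝ) + j + 1)⁻¹) else 0)
      (∑ j ∈ Finset.range m, ((j : ℝ) + 1)⁻¹) :=
    hasSum_sum (fun j _ => key j)
  have heq2 : (fun d : ℕ => ∑ j ∈ Finset.range m,
      if 0 < d then (((d : ℝ) + j)⁻¹ - ((d : ℝ) + j + 1)⁻¹) else 0)
      = (fun d : ℕ => if 0 < d then ((d : ℝ)⁻¹ - ((d : ℝ) + m)⁻¹) else 0) := by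
    funext d
    by_cases hd : 0 < d
    · simp only [if_pos hd]
      have h := Finset.sum_range_sub' (f := fun j : ℕ => ((d : ℝ) + j)⁻¹) m
      rw [show ((d:ℝ)⁻¹ - ((d:ℝ) + m)⁻¹) = ((d:ℝ) + (0:ℕ))⁻¹ - ((d:ℝ) + m)⁻¹ by norm_num, ← h]
      apply Finset.sum_congr rfl
      intro j _
      push_cast
      ring_nf
    · simp [hd]
  unfold Hh
  rw [← heq2]
  exact hsum

/-- The A-part summand. -/
noncomputable def gA (r : ℕ) (q : ℕ × ℕ) : ℝ :=
  if 0 < q.1 ∧ 0 < q.2 then ((q.1 : ℝ) ^ (r - 1) * ((q.1 : ℝ) + q.2) * q.2)⁻¹ else 0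

/-- The B-part summand. -/
noncomputable def gB (r : ℕ) (q : ℕ × ℕ) : ℝ :=
  if 0 < q.1 ∧ 0 < q.2 then (((q.1 : ℝ) + q.2) ^ r * q.2)⁻¹ else 0

lemma gA_nonneg (r : ℕ) (q : ℕ × ℕ) : 0 ≤ gA r q := by
  unfold gA; split_ifs with h
  · positivity
  · exact le_rfl

lemma gB_nonneg (r : ℕ) (q : ℕ × ℕ) : 0 ≤ gB r q := by
  unfold gB; split_ifs with h
  · positivity
  · exact le_rfl

lemma summable_gA {r : ℕ} (hr : 2 ≤ r) : Summable (gA r) := by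
  apply Summable.of_nonneg_of_le (gA_nonneg r) _ summable_K
  intro ⟨m, d⟩
  unfold gA
  dsimp only
  split_ifs with h
  · obtain ⟨hm, hd⟩ := h
    apply inv_le_K hm hd
    have hm1 : (1:ℝ) ≤ m := by exact_mod_cast hm
    have hd1 : (1:ℝ) ≤ d := by exact_mod_cast hd
    have hy0 : (0:ℝ) ≤ (m:ℝ) + d := by linarith
    have hd0 : (0:ℝ) ≤ (d:ℝ) := by linarith
    have h1 : (m:ℝ) ≤ (m:ℝ) ^ (r - 1) := le_self_pow₀ hm1 (by omega)
    have h3 := mul_le_mul_of_nonneg_right (mul_le_mul_of_nonneg_right h1 hy0) hd0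
    calc (m : ℝ) * d * ((m : ℝ) + d) = (m:ℝ) * ((m:ℝ) + d) * d := by ring
      _ ≤ (m:ℝ) ^ (r - 1) * ((m:ℝ) + d) * d := h3
  · positivity

lemma summable_gB {r : ℕ} (hr : 2 ≤ r) : Summable (gB r) := by
  apply Summable.of_nonneg_of_le (gB_nonneg r) _ summable_K
  intro ⟨m, d⟩
  unfold gB
  dsimp only
  split_ifs with h
  · obtain ⟨hm, hd⟩ := h
    apply inv_le_K hm hd
    have hm1 : (1:ℝ) ≤ m := by exact_mod_cast hm
    have hd1 : (1:ℝ) ≤ d := by exact_mod_cast hd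
    have hy1 : (1:ℝ) ≤ (m:ℝ) + d := by linarith
    have hd0 : (0:ℝ) ≤ (d:ℝ) := by linarith
    have hy0 : (0:ℝ) ≤ (m:ℝ) + d := by linarith
    have h2 : ((m:ℝ) + d) ^ 2 ≤ ((m:ℝ) + d) ^ r := pow_le_pow_right₀ hy1 hr
    have h4 := mul_le_mul_of_nonneg_right h2 hd0
    calc (m : ℝ) * d * ((m : ℝ) + d) = (m:ℝ) * ((m:ℝ) + d) * d := by ring
      _ ≤ ((m:ℝ) + d) * ((m:ℝ) + d) * d := by nlinarith [mul_nonneg (mul_nonneg hd0 hy0) hd0]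
      _ = ((m:ℝ) + d) ^ 2 * d := by ring
      _ ≤ ((m:ℝ) + d) ^ r * d := h4
  · positivity

/-- The key finite geometric-sum identity. -/
lemma geom_id (r : ℕ) (hr : 2 ≤ r) (x d : ℝ) (hx : 0 < x) (hd : 0 < d) :
    ∑ p ∈ Finset.Icc 2 r, (x ^ (r + 1 - p) * (x + d) ^ p)⁻¹
      = (x ^ (r - 1) * (x + d) * d)⁻¹ - ((x + d) ^ r * d)⁻¹ := by
  have hy : (0:ℝ) < x + d := by linarith
  have hx' : x ≠ 0 := ne_of_gt hx
  have hd' : d ≠ 0 := ne_of_gt hd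
  have hy' : x + d ≠ 0 := ne_of_gt hy
  induction r, hr using Nat.le_induction with
  | base =>
    rw [show Finset.Icc 2 2 = {2} from Finset.Icc_self 2, Finset.sum_singleton]
    norm_num
    field_simp
    ring
  | succ r hr ih =>
    rw [Finset.sum_Icc_succ_top (by omega : 2 ≤ r + 1)]
    have hstep : ∀ p ∈ Finset.Icc 2 r, (x ^ (r + 1 + 1 - p) * (x + d) ^ p)⁻¹
        = x⁻¹ * (x ^ (r + 1 - p) * (x + d) ^ p)⁻¹ := by
      intro p hp
      simp only [Finset.mem_Icc] at hp
      rw [show r + 1 + 1 - p = (r + 1 - p) + 1 by omega, pow_succ]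
      rw [mul_inv, mul_inv, mul_inv]
      ring
    rw [Finset.sum_congr rfl hstep, ← Finset.mul_sum, ih]
    rw [show r + 1 + 1 - (r + 1) = 1 by omega, pow_one]
    rw [show r + 1 - 1 = r by omega]
    obtain ⟨k, rfl⟩ : ∃ k, r = k + 2 := ⟨r - 2, by omega⟩
    rw [show k + 2 - 1 = k + 1 by omega]
    field_simp
    ring


/-- The summand of `dzeta 1 r` indexed as `(M, d)` with `d < M`. -/
noncomputable def gG (r : ℕ) (q : ℕ × ℕ) : ℝ :=
  if 0 < q.2 ∧ q.2 < q.1 then ((q.1 : ℝ) ^ r * q.2)⁻¹ else 0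

lemma gG_nonneg (r : ℕ) (q : ℕ × ℕ) : 0 ≤ gG r q := by
  unfold gG
  split_ifs with h
  · positivity
  · exact le_rfl

lemma summable_gG {r : ℕ} (hr : 2 ≤ r) : Summable (gG r) := by
  apply Summable.of_nonneg_of_le (gG_nonneg r) _ summable_K
  intro ⟨M, d⟩
  unfold gG
  dsimp only
  split_ifs with h
  · obtain ⟨hd, hdM⟩ := h
    have hM : 0 < M := lt_trans hd hdM
    have hM1 : (1:ℝ) ≤ M := by exact_mod_cast hM
    have hd1 : (1:ℝ) ≤ d := by exact_mod_cast hd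
    have hdM' : (d:ℝ) ≤ M := by exact_mod_cast le_of_lt hdM
    have hM0 : (0:ℝ) < M := by linarith
    have hd0 : (0:ℝ) < d := by linarith
    have hMs : (0:ℝ) < Real.sqrt M := Real.sqrt_pos.2 hM0
    have hds : (0:ℝ) < Real.sqrt d := Real.sqrt_pos.2 hd0
    rw [← mul_inv]
    apply inv_anti₀ (by positivity)
    have hsq : Real.sqrt d ≤ Real.sqrt M := Real.sqrt_le_sqrt hdM'
    have hsqM : Real.sqrt M * Real.sqrt M = (M:ℝ) := Real.mul_self_sqrt (by positivity)
    have h2 : ((M:ℝ)) ^ 2 ≤ ((M:ℝ)) ^ r := pow_le_pow_right₀ hM1 hr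
    have h2' := mul_le_mul_of_nonneg_right h2 (le_of_lt hd0)
    calc (M:ℝ) * Real.sqrt M * ((d:ℝ) * Real.sqrt d)
        = (M:ℝ) * d * (Real.sqrt M * Real.sqrt d) := by ring
      _ ≤ (M:ℝ) * d * (Real.sqrt M * Real.sqrt M) := by
          exact mul_le_mul_of_nonneg_left
            (mul_le_mul_of_nonneg_left hsq (le_of_lt hMs)) (by positivity)
      _ = (M:ℝ) ^ 2 * d := by rw [hsqM]; ring
      _ ≤ (M:ℝ) ^ r * d := h2'
  · have hM0 : (0:ℝ) ≤ (M:ℝ) * Real.sqrt M := by positivity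
    have hd0 : (0:ℝ) ≤ (d:ℝ) * Real.sqrt d := by positivity
    positivity

lemma gB_eq_gG (r : ℕ) : ∑' q : ℕ × ℕ, gB r q = ∑' q : ℕ × ℕ, gG r q := by
  have hinj : Function.Injective (fun q : ℕ × ℕ => (q.1 + q.2, q.2)) := by
    rintro ⟨a1, a2⟩ ⟨b1, b2⟩ h
    simp only [Prod.mk.injEq] at h ⊢
    omega
  have hsupp : Function.support (gG r) ⊆ Set.range (fun q : ℕ × ℕ => (q.1 + q.2, q.2)) := by
    rintro ⟨M, d⟩ hp
    have hlt : 0 < d ∧ d < M := by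
      by_contra hc
      exact hp (if_neg hc)
    have hadd : M - d + d = M := by omega
    exact ⟨(M - d, d), by simp [hadd]⟩
  have key := Function.Injective.tsum_eq hinj (f := gG r) hsupp
  rw [← key]
  apply tsum_congr
  rintro ⟨m, d⟩
  simp only [gB, gG]
  have hcond : (0 < d ∧ d < m + d) ↔ (0 < m ∧ 0 < d) := by omega
  by_cases h : 0 < m ∧ 0 < d
  · rw [if_pos (hcond.2 h), if_pos h]
    push_cast
    ring_nf
  · rw [if_neg (fun hc => h (hcond.1 hc)), if_neg h]

/-- Euler's sum formula: for `r ≥ 2`, `ζ(r+1) = ∑_{p=2}^{r} ζ(r+1-p, p)`. -/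
theorem euler_sum_formula (r : ℕ) (hr : 2 ≤ r) :
    szeta (r + 1) = ∑ p ∈ Finset.Icc 2 r, dzeta (r + 1 - p) p := by
  have hsumgP : ∀ p ∈ Finset.Icc 2 r, Summable (gP (r + 1 - p) p) := by
    intro p hp
    simp only [Finset.mem_Icc] at hp
    exact summable_gP (by omega) hp.1
  have h1 : ∀ p ∈ Finset.Icc 2 r, dzeta (r + 1 - p) p = ∑' q : ℕ × ℕ, gP (r + 1 - p) p q :=
    fun p _ => dzeta_eq_s2 _ _
  rw [Finset.sum_congr rfl h1, ← Summable.tsum_finsetSum hsumgP]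
  have h2 : ∀ q : ℕ × ℕ, (∑ p ∈ Finset.Icc 2 r, gP (r + 1 - p) p q) = gA r q - gB r q := by
    rintro ⟨m, d⟩
    by_cases h : 0 < m ∧ 0 < d
    · obtain ⟨hm, hd⟩ := h
      have hm' : (0:ℝ) < m := by exact_mod_cast hm
      have hd' : (0:ℝ) < d := by exact_mod_cast hd
      simp only [gP, gA, gB, if_pos (And.intro hm hd)]
      exact geom_id r hr (m:ℝ) (d:ℝ) hm' hd'
    · simp only [gP, gA, gB, if_neg h]
      simp
  rw [tsum_congr h2, Summable.tsum_sub (summable_gA hr) (summable_gB hr), gB_eq_gG r]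
  -- inner sums
  have hAinner : ∀ m : ℕ, ∑' d : ℕ, gA r (m, d)
      = (if 0 < m then ((m:ℝ) ^ r)⁻¹ * Hh m else 0) := by
    intro m
    by_cases hm : 0 < m
    · rw [if_pos hm]
      have hm' : (0:ℝ) < m := by exact_mod_cast hm
      have hpow : (m:ℝ) ^ r = (m:ℝ) ^ (r - 1) * m := by
        rw [← pow_succ]
        congr 1
        omega
      have heq : (fun d : ℕ => gA r (m, d)) = (fun d : ℕ =>
          ((m:ℝ) ^ r)⁻¹ * (if 0 < d then ((d : ℝ)⁻¹ - ((d : ℝ) + m)⁻¹) else 0)) := by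
        funext d
        simp only [gA]
        by_cases hd : 0 < d
        · rw [if_pos (And.intro hm hd), if_pos hd]
          have hd' : (0:ℝ) < d := by exact_mod_cast hd
          rw [hpow]
          have h1 : (m:ℝ) ^ (r - 1) ≠ 0 := by positivity
          field_simp
          ring
        · rw [if_neg (fun hc => hd hc.2), if_neg hd, mul_zero]
      rw [heq]
      exact ((hasSum_innerA m hm).mul_left _).tsum_eq
    · rw [if_neg hm]
      have heq : (fun d : ℕ => gA r (m, d)) = (fun _ : ℕ => (0:ℝ)) := by
        funext d
        exact if_neg (fun hc => hm hc.1)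
      rw [heq]
      exact tsum_zero
  have hGinner : ∀ M : ℕ, ∑' d : ℕ, gG r (M, d)
      = (if 0 < M then ((M:ℝ) ^ r)⁻¹ * Hh (M - 1) else 0) := by
    intro M
    have hvanish : ∀ d ∉ Finset.range M, gG r (M, d) = 0 := by
      intro d hd
      simp only [Finset.mem_range, not_lt] at hd
      exact if_neg (fun hc => absurd hc.2 (not_lt.2 hd))
    rw [tsum_eq_sum hvanish]
    cases M with
    | zero => simp
    | succ M' =>
      rw [if_pos (Nat.succ_pos M'), Finset.sum_range_succ']
      have hzero : gG r (M' + 1, 0) = 0 := if_neg (by simp)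
      rw [hzero, add_zero]
      have hcongr : ∀ j ∈ Finset.range M', gG r (M' + 1, j + 1)
          = (((M' + 1 : ℕ) : ℝ) ^ r)⁻¹ * ((j : ℝ) + 1)⁻¹ := by
        intro j hj
        simp only [Finset.mem_range] at hj
        rw [show gG r (M' + 1, j + 1) = ((((M' + 1 : ℕ)) : ℝ) ^ r * ((j + 1 : ℕ) : ℝ))⁻¹ from
          if_pos (by omega)]
        push_cast
        rw [mul_inv]
      rw [Finset.sum_congr rfl hcongr, ← Finset.mul_sum]
      simp only [Nat.add_sub_cancel]
      rfl
  rw [Summable.tsum_prod (summable_gA hr), Summable.tsum_prod (summable_gG hr),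
    tsum_congr hAinner, tsum_congr hGinner]
  -- summability of the marginals
  have hsummA : Summable (fun m : ℕ => if 0 < m then ((m:ℝ) ^ r)⁻¹ * Hh m else 0) := by
    have h := ((summable_prod_of_nonneg (fun q => gA_nonneg r q)).1 (summable_gA hr)).2
    exact h.congr hAinner
  have hsummG : Summable (fun M : ℕ => if 0 < M then ((M:ℝ) ^ r)⁻¹ * Hh (M - 1) else 0) := by
    have h := ((summable_prod_of_nonneg (fun q => gG_nonneg r q)).1 (summable_gG hr)).2
    exact h.congr hGinner
  rw [← Summable.tsum_sub hsummA hsummG]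
  unfold szeta
  apply tsum_congr
  intro m
  by_cases hm : 0 < m
  · rw [if_pos hm, if_pos hm, if_pos hm]
    have hm' : (0:ℝ) < m := by exact_mod_cast hm
    have hH : Hh m = Hh (m - 1) + ((m:ℝ))⁻¹ := by
      obtain ⟨m', rfl⟩ : ∃ m', m = m' + 1 := ⟨m - 1, by omega⟩
      unfold Hh
      rw [Nat.add_sub_cancel, Finset.sum_range_succ]
      push_cast
      ring
    rw [hH, pow_succ]
    field_simp
    ring
  · simp [hm]
end

section
/- The polynomial P(X,Y) = XY(X^2-Y^2)^2(4X^4 - 17X^2Y^2 + 4Y^4) satisfies P|(1+S) = 0 and P|(1+U+U^2) = 0, and P(-X,Y) = -P(X,Y), so P lies in the odd part W_{10}^- of the space of period polynomials of degree 10. -/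
open MvPolynomial

/-- The slash action `(P|γ)(X,Y) = P(aX+bY, cX+dY)` for `γ = [[a,b],[c,d]]`,
as a linear endomorphism of polynomials in two variables. -/
noncomputable def slashL (a b c d : ℚ) :
    MvPolynomial (Fin 2) ℚ →ₗ[ℚ] MvPolynomial (Fin 2) ℚ :=
  (MvPolynomial.aeval
    ![a • MvPolynomial.X 0 + b • MvPolynomial.X 1,
      c • MvPolynomial.X 0 + d • MvPolynomial.X 1]).toLinearMap

/-- `V_w`: the space of homogeneous polynomials of degree `w` in `X, Y`. -/
noncomputable def Vw (w : ℕ) : Submodule ℚ (MvPolynomial (Fin 2) ℚ) :=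
  MvPolynomial.homogeneousSubmodule (Fin 2) ℚ w

/-- The space of period polynomials
`W_w = { P ∈ V_w : P|(1+S) = 0, P|(1+U+U²) = 0 }`,
with `S = [[0,-1],[1,0]]`, `U = [[1,-1],[1,0]]`, `U² = [[0,-1],[1,-1]]`. -/
noncomputable def Ww (w : ℕ) : Submodule ℚ (MvPolynomial (Fin 2) ℚ) :=
  Vw w ⊓ LinearMap.ker (LinearMap.id + slashL 0 (-1) 1 0) ⊓
    LinearMap.ker (LinearMap.id + slashL 1 (-1) 1 0 + slashL 0 (-1) 1 (-1))

/-- `W_w⁺ = { P ∈ W_w : P(-X,Y) = P(X,Y) }`. -/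
noncomputable def WwPlus (w : ℕ) : Submodule ℚ (MvPolynomial (Fin 2) ℚ) :=
  Ww w ⊓ LinearMap.ker (slashL (-1) 0 0 1 - LinearMap.id)

/-- `W_w⁻ = { P ∈ W_w : P(-X,Y) = -P(X,Y) }`. -/
noncomputable def WwMinus (w : ℕ) : Submodule ℚ (MvPolynomial (Fin 2) ℚ) :=
  Ww w ⊓ LinearMap.ker (slashL (-1) 0 0 1 + LinearMap.id)

set_option maxHeartbeats 2000000 in
/-- `P(X,Y) = XY(X²-Y²)²(4X⁴ - 17X²Y² + 4Y⁴)` satisfies `P|(1+S) = 0`,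
`P|(1+U+U²) = 0`, and `P(-X,Y) = -P(X,Y)`; hence `P ∈ W₁₀⁻`. -/
theorem odd_period_polynomial_example :
    let X : MvPolynomial (Fin 2) ℚ := MvPolynomial.X 0
    let Y : MvPolynomial (Fin 2) ℚ := MvPolynomial.X 1
    let P : MvPolynomial (Fin 2) ℚ :=
      X * Y * (X ^ 2 - Y ^ 2) ^ 2 * (4 * X ^ 4 - 17 * X ^ 2 * Y ^ 2 + 4 * Y ^ 4)
    P + slashL 0 (-1) 1 0 P = 0 ∧
    P + slashL 1 (-1) 1 0 P + slashL 0 (-1) 1 (-1) P = 0 ∧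
    slashL (-1) 0 0 1 P = -P ∧
    P ∈ WwMinus 10 := by
  intro X Y P
  have hX : (MvPolynomial.X 0 : MvPolynomial (Fin 2) ℚ).IsHomogeneous 1 :=
    MvPolynomial.isHomogeneous_X _ _
  have hY : (MvPolynomial.X 1 : MvPolynomial (Fin 2) ℚ).IsHomogeneous 1 :=
    MvPolynomial.isHomogeneous_X _ _
  have h1 : P + slashL 0 (-1) 1 0 P = 0 := by
    simp only [slashL, AlgHom.toLinearMap_apply, P, X, Y, map_add, map_mul, map_sub, map_pow,
      map_ofNat, aeval_X, Matrix.cons_val_zero, Matrix.cons_val_one, Matrix.head_cons,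
      zero_smul, one_smul, neg_smul, zero_add, add_zero]
    ring
  have h2 : P + slashL 1 (-1) 1 0 P + slashL 0 (-1) 1 (-1) P = 0 := by
    simp only [slashL, AlgHom.toLinearMap_apply, P, X, Y, map_add, map_mul, map_sub, map_pow,
      map_ofNat, aeval_X, Matrix.cons_val_zero, Matrix.cons_val_one, Matrix.head_cons,
      zero_smul, one_smul, neg_smul, zero_add, add_zero]
    ring
  have h3 : slashL (-1) 0 0 1 P = -P := by
    simp only [slashL, AlgHom.toLinearMap_apply, P, X, Y, map_add, map_mul, map_sub, map_pow,
      map_ofNat, aeval_X, Matrix.cons_val_zero, Matrix.cons_val_one, Matrix.head_cons,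
      zero_smul, one_smul, neg_smul, zero_add, add_zero]
    ring
  refine ⟨h1, h2, h3, ⟨⟨?_, ?_⟩, ?_⟩, ?_⟩
  · show P ∈ Vw 10
    rw [Vw, MvPolynomial.mem_homogeneousSubmodule]
    have : P = X * Y * (X ^ 2 - Y ^ 2) ^ 2 * (4 * X ^ 4 - 17 * X ^ 2 * Y ^ 2 + 4 * Y ^ 4) := rfl
    rw [this]
    have h4a : ((4 : MvPolynomial (Fin 2) ℚ) * X ^ 4).IsHomogeneous 4 := by
      simpa [map_ofNat, X, Y] using (MvPolynomial.isHomogeneous_C (Fin 2) (4:ℚ)).mul (hX.pow 4)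
    have h4b : ((17 : MvPolynomial (Fin 2) ℚ) * X ^ 2 * Y ^ 2).IsHomogeneous 4 := by
      simpa [map_ofNat, X, Y] using ((MvPolynomial.isHomogeneous_C (Fin 2) (17:ℚ)).mul (hX.pow 2)).mul (hY.pow 2)
    have h4c : ((4 : MvPolynomial (Fin 2) ℚ) * Y ^ 4).IsHomogeneous 4 := by
      simpa [map_ofNat, X, Y] using (MvPolynomial.isHomogeneous_C (Fin 2) (4:ℚ)).mul (hY.pow 4)
    have := ((hX.mul hY).mul (((hX.pow 2).sub (hY.pow 2)).pow 2)).mul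
      ((h4a.sub h4b).add h4c)
    simpa using this
  · rw [SetLike.mem_coe, LinearMap.mem_ker, LinearMap.add_apply, LinearMap.id_apply]; exact h1
  · rw [SetLike.mem_coe, LinearMap.mem_ker, LinearMap.add_apply, LinearMap.add_apply, LinearMap.id_apply]; exact h2
  · rw [SetLike.mem_coe, LinearMap.mem_ker, LinearMap.add_apply, LinearMap.id_apply, h3]; ring
end

section
/- Let w \ge 0 be even and V_w^+ = { P \in V_w : P(-X,Y) = P(X,Y) }. Then W_w^+ = { P \in V_w^+ : P(X,Y) - P(Y-X, Y) + P(Y-X, X) = 0 }, i.e., for even polynomials the two defining conditions P|(1+S) = 0 and P|(1+U+U^2) = 0 are together equivalent to the single functional equation P(X,Y) - P(Y-X,Y) + P(Y-X,X) = 0. -/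
open MvPolynomial

/-!
For `P` invariant under `ε = [[-1,0],[0,1]]` one has `P|(εγ) = P|γ`, so the single equation
`P - P|[[-1,1],[0,1]] + P|[[-1,1],[1,0]] = 0` reads `P - P|T⁻¹ + P|U = 0` with `T = [[1,1],[0,1]]`.
Slashing it with `σ = [[0,1],[1,0]]` (and using `εS = σ`) and adding gives `P|(1+S) = 0`; slashing it
with `U` (using `T⁻¹U = S`, `U·U = U²`) then gives `P|(1+U+U²) = 0`. Conversely `[[-1,1],[0,1]] = S·(εU²)`,
so the two period relations combine to the single equation.
-/

/-- `(P|γ)|γ' = P|(γγ')`. -/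
lemma slashL_slashL (a b c d a' b' c' d' : ℚ) (P : MvPolynomial (Fin 2) ℚ) :
    slashL a' b' c' d' (slashL a b c d P)
      = slashL (a*a'+b*c') (a*b'+b*d') (c*a'+d*c') (c*b'+d*d') P := by
  have h : (aeval ![a' • (X 0 : MvPolynomial (Fin 2) ℚ) + b' • X 1, c' • X 0 + d' • X 1]).comp
      (aeval ![a • (X 0 : MvPolynomial (Fin 2) ℚ) + b • X 1, c • X 0 + d • X 1])
      = aeval ![(a*a'+b*c') • (X 0 : MvPolynomial (Fin 2) ℚ) + (a*b'+b*d') • X 1,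
          (c*a'+d*c') • X 0 + (c*b'+d*d') • X 1] := by
    apply algHom_ext
    intro i
    fin_cases i <;> simp [smul_add, smul_smul] <;> module
  simpa only [slashL, AlgHom.toLinearMap_apply, ← AlgHom.comp_apply] using
    DFunLike.congr_fun h P

lemma slashL_neg_top_row {P : MvPolynomial (Fin 2) ℚ} (hε : slashL (-1) 0 0 1 P = P)
    (a b c d : ℚ) : slashL (-a) (-b) c d P = slashL a b c d P := by
  simpa [hε] using (slashL_slashL (-1) 0 0 1 a b c d P).symm

lemma period_relations_imp_single_equation {P : MvPolynomial (Fin 2) ℚ}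
    (hε : slashL (-1) 0 0 1 P = P) (hS : P + slashL 0 (-1) 1 0 P = 0)
    (hU : P + slashL 1 (-1) 1 0 P + slashL 0 (-1) 1 (-1) P = 0) :
    P - slashL (-1) 1 0 1 P + slashL (-1) 1 1 0 P = 0 := by
  have hSP : slashL 0 (-1) 1 0 P = -P := by linear_combination hS
  have hεU2 : slashL 0 1 1 (-1) P = slashL 0 (-1) 1 (-1) P := by
    simpa using slashL_neg_top_row hε 0 (-1) 1 (-1)
  have hT' : slashL (-1) 1 0 1 P = -slashL 0 (-1) 1 (-1) P := by
    have h := slashL_slashL 0 (-1) 1 0 0 1 1 (-1) P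
    rw [hSP, map_neg, hεU2] at h
    norm_num at h
    exact h.symm
  have hεU : slashL (-1) 1 1 0 P = slashL 1 (-1) 1 0 P := by
    simpa using slashL_neg_top_row hε 1 (-1) 1 0
  rw [hT', hεU]
  linear_combination hU

lemma single_equation_imp_period_relations {P : MvPolynomial (Fin 2) ℚ}
    (hε : slashL (-1) 0 0 1 P = P) (hE : P - slashL (-1) 1 0 1 P + slashL (-1) 1 1 0 P = 0) :
    P + slashL 0 (-1) 1 0 P = 0 ∧ P + slashL 1 (-1) 1 0 P + slashL 0 (-1) 1 (-1) P = 0 := by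
  have hεT : slashL (-1) 1 0 1 P = slashL 1 (-1) 0 1 P := by
    simpa using slashL_neg_top_row hε 1 (-1) 0 1
  have hεU : slashL (-1) 1 1 0 P = slashL 1 (-1) 1 0 P := by
    simpa using slashL_neg_top_row hε 1 (-1) 1 0
  have hεS : slashL 0 1 1 0 P = slashL 0 (-1) 1 0 P := by
    simpa using slashL_neg_top_row hε 0 (-1) 1 0
  have hE' : P - slashL 1 (-1) 0 1 P + slashL 1 (-1) 1 0 P = 0 := by
    rwa [← hεT, ← hεU]
  have hσ := congrArg (slashL 0 1 1 0) hE'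
  simp only [map_add, map_sub, map_zero, slashL_slashL] at hσ
  norm_num [hεT, hεU] at hσ
  have hS : P + slashL 0 (-1) 1 0 P = 0 := by
    rw [← hεS]; linear_combination hσ + hE'
  have hUU := congrArg (slashL 1 (-1) 1 0) hE'
  simp only [map_add, map_sub, map_zero, slashL_slashL] at hUU
  norm_num at hUU
  exact ⟨hS, by linear_combination hUU + hS⟩

theorem even_period_polynomials_single_equation_general (w : ℕ) :
    WwPlus w =
      (Vw w ⊓ LinearMap.ker (slashL (-1) 0 0 1 - LinearMap.id)) ⊓
        LinearMap.ker (LinearMap.id - slashL (-1) 1 0 1 + slashL (-1) 1 1 0) := by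
  ext P
  simp only [WwPlus, Ww, Submodule.mem_inf, LinearMap.mem_ker, LinearMap.add_apply,
    LinearMap.sub_apply, LinearMap.id_apply, sub_eq_zero]
  constructor
  · rintro ⟨⟨⟨hV, hS⟩, hU⟩, hε⟩
    exact ⟨⟨hV, hε⟩, period_relations_imp_single_equation hε hS hU⟩
  · rintro ⟨⟨hV, hε⟩, hE⟩
    obtain ⟨hS, hU⟩ := single_equation_imp_period_relations hε hE
    exact ⟨⟨⟨hV, hS⟩, hU⟩, hε⟩

/-- For even `w`, the even period polynomials are exactly the even homogeneous
polynomials `P` of degree `w` satisfying the single functional equation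
`P(X,Y) - P(Y-X,Y) + P(Y-X,X) = 0`. -/
theorem even_period_polynomials_single_equation (w : ℕ) (hw : Even w) :
    WwPlus w =
      (Vw w ⊓ LinearMap.ker (slashL (-1) 0 0 1 - LinearMap.id)) ⊓
        LinearMap.ker (LinearMap.id - slashL (-1) 1 0 1 + slashL (-1) 1 1 0) :=
  even_period_polynomials_single_equation_general w
end

section
/- For even w \ge 0, the space W_w^+ of even period polynomials contains X^w - Y^w, and W_w^+ decomposes as the direct sum Q(X^w - Y^w) \oplus W_w^{+,0}, where W_w^{+,0} = { P \in W_w^+ : P(X, 0) = 0 }. -/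
open MvPolynomial

/-- `W_w^{+,0} = { P ∈ W_w⁺ : P(X,0) = 0 }`. -/
noncomputable def WwPlusZero (w : ℕ) : Submodule ℚ (MvPolynomial (Fin 2) ℚ) :=
  WwPlus w ⊓ LinearMap.ker (slashL 1 0 0 0)

/-!
Setting `Y = 0` sends a homogeneous `P` of degree `w` to `c_P X^w`, where `c_P` is its
`X^w`-coefficient, and sends `X^w - Y^w` to `X^w` when `w > 0`; hence
`P = c_P (X^w - Y^w) + (P - c_P (X^w - Y^w))` with the second summand in `W_w^{+,0}`,
and the decomposition is direct because `X^w ≠ 0`. For `w = 0` everything vanishes: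
a constant is fixed by `S`, so `P|(1+S) = 2P` forces `W_0 = 0`.
-/

section LinearAlgebra

variable {K V V' : Type*} [Field K] [AddCommGroup V] [Module K V] [AddCommGroup V'] [Module K V']

theorem Submodule.span_singleton_sup_inf_ker_eq {W : Submodule K V} {f : V →ₗ[K] V'} {e : V}
    (he : e ∈ W) (hf : ∀ x ∈ W, ∃ c : K, f x = c • f e) :
    K ∙ e ⊔ (W ⊓ LinearMap.ker f) = W := by
  refine le_antisymm (sup_le ((span_singleton_le_iff_mem e W).2 he) inf_le_left) fun x hx ↦ ?_
  obtain ⟨c, hc⟩ := hf x hx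
  refine mem_sup.2 ⟨c • e, smul_mem _ c (mem_span_singleton_self e), x - c • e,
    ⟨sub_mem hx (W.smul_mem c he), LinearMap.mem_ker.2 ?_⟩, add_sub_cancel _ _⟩
  rw [map_sub, map_smul, hc, sub_self]

end LinearAlgebra

namespace MvPolynomial

theorem IsHomogeneous.aeval_vecCons_zero {R A : Type*} [CommSemiring R] [CommSemiring A]
    [Algebra R A] {n : ℕ} {P : MvPolynomial (Fin 2) R} (hP : P.IsHomogeneous n) (x : A) :
    MvPolynomial.aeval ![x, 0] P = P.coeff (Finsupp.single 0 n) • x ^ n := by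
  conv_lhs => rw [P.as_sum, map_sum]
  refine (Finset.sum_eq_single (Finsupp.single 0 n) (fun d hd hne ↦ ?_) fun h ↦ ?_).trans ?_
  · have hdeg : d 0 + d 1 = n := by
      simpa [Finsupp.weight_apply, Finsupp.sum_fintype] using hP (mem_support_iff.1 hd)
    have hd1 : d 1 ≠ 0 := fun h1 ↦ hne <| by
      ext i; fin_cases i <;> simp [h1, ← hdeg]
    simp [aeval_monomial, Finsupp.prod_fintype, zero_pow hd1]
  · simp [notMem_support_iff.1 h]
  · simp [aeval_monomial, Finsupp.prod_fintype, Algebra.smul_def]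

end MvPolynomial

open MvPolynomial

theorem slashL_apply (a b c d : ℚ) (P : MvPolynomial (Fin 2) ℚ) :
    slashL a b c d P = aeval ![a • X 0 + b • X 1, c • X 0 + d • X 1] P := rfl

theorem slashL_one_zero_zero_zero_of_isHomogeneous {w : ℕ} {P : MvPolynomial (Fin 2) ℚ}
    (hP : P.IsHomogeneous w) : slashL 1 0 0 0 P = P.coeff (Finsupp.single 0 w) • X 0 ^ w := by
  rw [← hP.aeval_vecCons_zero, slashL_apply]
  simp

theorem slashL_one_zero_zero_zero_X_pow_sub_X_pow {w : ℕ} (hw : w ≠ 0) :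
    slashL 1 0 0 0 (X 0 ^ w - X 1 ^ w) = X 0 ^ w := by
  simp [slashL_apply, zero_pow hw]

theorem X_pow_sub_X_pow_mem_WwPlus {w : ℕ} (hw : Even w) :
    (X 0 ^ w - X 1 ^ w : MvPolynomial (Fin 2) ℚ) ∈ WwPlus w := by
  refine ⟨⟨⟨(isHomogeneous_X_pow 0 w).sub (isHomogeneous_X_pow 1 w), ?_⟩, ?_⟩, ?_⟩ <;>
    simp [LinearMap.mem_ker, slashL_apply, hw.neg_pow]

theorem Ww_zero : Ww 0 = ⊥ := by
  refine (Submodule.eq_bot_iff _).2 fun P ⟨⟨hP, hS⟩, _⟩ ↦ ?_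
  have hC : P = C (P.coeff 0) :=
    totalDegree_eq_zero_iff_eq_C.1 ((totalDegree_zero_iff_isHomogeneous _).2 hP)
  have h2 : P + P = 0 := by
    have := LinearMap.mem_ker.1 hS
    rwa [LinearMap.add_apply, LinearMap.id_apply, hC, slashL_apply, aeval_C, algebraMap_eq,
      ← hC] at this
  simpa using h2

/-- For even `w`, `X^w - Y^w ∈ W_w⁺`, and
`W_w⁺ = ℚ(X^w - Y^w) ⊕ W_w^{+,0}`. -/
theorem even_period_polynomials_splitting (w : ℕ) (hw : Even w) :
    (MvPolynomial.X 0 ^ w - MvPolynomial.X 1 ^ w : MvPolynomial (Fin 2) ℚ) ∈ WwPlus w ∧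
    Disjoint
      (Submodule.span ℚ {(MvPolynomial.X 0 ^ w - MvPolynomial.X 1 ^ w : MvPolynomial (Fin 2) ℚ)})
      (WwPlusZero w) ∧
    Submodule.span ℚ {(MvPolynomial.X 0 ^ w - MvPolynomial.X 1 ^ w : MvPolynomial (Fin 2) ℚ)} ⊔
      WwPlusZero w = WwPlus w := by
  have hE := X_pow_sub_X_pow_mem_WwPlus hw
  obtain rfl | hw0 := eq_or_ne w 0
  · have hbot : WwPlus 0 = ⊥ := eq_bot_mono inf_le_left Ww_zero
    have hbot' : WwPlusZero 0 = ⊥ := eq_bot_mono inf_le_left hbot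
    simp [hbot, hbot']
  have hEval := slashL_one_zero_zero_zero_X_pow_sub_X_pow hw0
  refine ⟨hE, ?_, Submodule.span_singleton_sup_inf_ker_eq hE fun P hP ↦ ?_⟩
  · refine (Submodule.disjoint_span_singleton_of_notMem ?_).symm.mono_right inf_le_right
    simp [LinearMap.mem_ker, hEval]
  · exact ⟨_, by rw [slashL_one_zero_zero_zero_of_isHomogeneous hP.1.1.1, hEval]⟩
end

section
/- In the formal double zeta space D_k for even k \ge 4, the restricted sum formulas hold: \sum_{r odd, 1 \le r \le k-3} Z_{r, k-r} = (1/4) Z_k and \sum_{r even, 2 \le r \le k-2} Z_{r, k-r} = (3/4) Z_k. -/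
/-!
Euler's sum formula is the double shuffle relation for `(r, s) = (1, k - 1)`. Summing the
relations for `(r, k - r)` with the sign `(-1) ^ r` (for even `k` this sign is symmetric under
`r ↦ k - r`), the coefficient of `Z_{k-p,p}` becomes twice an alternating sum of binomial
coefficients `∑ (-1) ^ r * C(p - 1, r - 1)`, which vanishes unless `p = 1`. This yields
`∑_{r ≤ k - 2} (-1) ^ r Z_{r,k-r} = Z_k / 2`, and adding and subtracting Euler's formula gives the
even and odd sums.
-/

open Finset

section Compositions

variable {M : Type*} [AddCommMonoid M]

theorem sum_Icc_one_pred_swap (k : ℕ) (g : ℕ → ℕ → M) :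
    ∑ p ∈ Icc 1 (k - 1), g (k - p) p = ∑ p ∈ Icc 1 (k - 1), g p (k - p) := by
  refine sum_nbij' (k - ·) (k - ·) ?_ ?_ ?_ ?_ ?_ <;> intro p hp <;> simp only [mem_Icc] at hp
  · simp only [mem_Icc]; omega
  · simp only [mem_Icc]; omega
  · omega
  · omega
  · rw [Nat.sub_sub_self (by omega)]

theorem sum_Icc_one_pred_eq_add (f : ℕ → M) {k : ℕ} (hk : 2 ≤ k) :
    ∑ r ∈ Icc 1 (k - 1), f r = ∑ r ∈ Icc 1 (k - 2), f r + f (k - 1) := by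
  obtain ⟨n, rfl⟩ := Nat.exists_eq_add_of_le' hk
  exact sum_Icc_succ_top (by omega) f

theorem sum_eq_sum_filter_even_add_sum_filter_odd (s : Finset ℕ) (f : ℕ → M) :
    ∑ r ∈ s, f r = ∑ r ∈ s.filter Even, f r + ∑ r ∈ s.filter Odd, f r := by
  simp only [← sum_filter_add_sum_filter_not s Even f, Nat.not_even_iff_odd]

end Compositions

section Signs

variable {R : Type*}

theorem Even.neg_one_pow_sub [Monoid R] [HasDistribNeg R] {k : ℕ} (hk : Even k) {r : ℕ}
    (hr : r ≤ k) : (-1 : R) ^ (k - r) = (-1) ^ r := by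
  rcases Nat.even_or_odd r with hr' | hr'
  · rw [hr'.neg_one_pow, ((Nat.even_sub hr).2 (iff_of_true hk hr')).neg_one_pow]
  · rw [hr'.neg_one_pow, (Nat.Even.sub_odd hr hk hr').neg_one_pow]

variable [Ring R]

theorem sum_Icc_one_pred_neg_one_pow {k : ℕ} (hk : Even k) (hk0 : k ≠ 0) :
    ∑ r ∈ Icc 1 (k - 1), (-1 : R) ^ r = -1 := by
  have : Icc 1 (k - 1) = Ico 1 k := by ext; simp only [mem_Icc, mem_Ico]; omega
  rw [this, sum_Ico_eq_sub _ (by omega), neg_one_geom_sum, if_pos hk]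
  simp

theorem sum_Icc_one_pred_neg_one_pow_mul_swap {k : ℕ} (hk : Even k) (g : ℕ → ℕ → R) :
    ∑ p ∈ Icc 1 (k - 1), (-1) ^ p * g (k - p) p = ∑ p ∈ Icc 1 (k - 1), (-1) ^ p * g p (k - p) :=
  calc ∑ p ∈ Icc 1 (k - 1), (-1) ^ p * g (k - p) p
      = ∑ p ∈ Icc 1 (k - 1), (-1) ^ (k - p) * g (k - p) p :=
        sum_congr rfl fun p hp => by rw [hk.neg_one_pow_sub (by simp only [mem_Icc] at hp; omega)]
    _ = _ := sum_Icc_one_pred_swap k fun a b => (-1) ^ a * g a b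

theorem sum_Icc_neg_one_pow_mul_choose_pred {m n : ℕ} (h : m < n) :
    ∑ r ∈ Icc 1 n, (-1 : R) ^ r * m.choose (r - 1) = if m = 0 then -1 else 0 := by
  have hshift : ∑ r ∈ Icc 1 n, (-1 : R) ^ r * m.choose (r - 1)
      = -∑ j ∈ range (m + 1), (-1 : R) ^ j * m.choose j := by
    rw [← Ico_add_one_right_eq_Icc, sum_Ico_eq_sum_range, Nat.add_sub_cancel, ← sum_neg_distrib]
    refine (sum_congr rfl fun j _ => ?_).trans (sum_subset (range_subset_range.2 (by omega)) fun j _ hj => ?_).symm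
    · rw [pow_add, pow_one, neg_one_mul, neg_mul, Nat.add_sub_cancel_left]
    · simp [Nat.choose_eq_zero_of_lt (by simpa using hj : m < j)]
  have halt := congrArg (Int.cast : ℤ → R) (Int.alternating_sum_range_choose (n := m))
  push_cast at halt
  rw [hshift, halt]
  split_ifs <;> simp

theorem sum_neg_one_pow_mul_eq_sub (s : Finset ℕ) (f : ℕ → R) :
    ∑ r ∈ s, (-1) ^ r * f r = ∑ r ∈ s.filter Even, f r - ∑ r ∈ s.filter Odd, f r := by
  rw [sum_eq_sum_filter_even_add_sum_filter_odd, sub_eq_add_neg, ← sum_neg_distrib]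
  congr 1 <;> refine sum_congr rfl fun r hr => ?_
  · rw [(mem_filter.1 hr).2.neg_one_pow, one_mul]
  · rw [(mem_filter.1 hr).2.neg_one_pow, neg_one_mul]

theorem sum_Icc_one_pred_neg_one_pow_mul_choose_add_choose {k p : ℕ}
    (hk : Even k) (hp : p ∈ Icc 1 (k - 1)) :
    ∑ r ∈ Icc 1 (k - 1), (-1 : R) ^ r * ((p - 1).choose (r - 1) + (p - 1).choose (k - r - 1) : ℕ)
      = if p = 1 then -2 else 0 := by
  have hp' : p - 1 < k - 1 := by simp only [mem_Icc] at hp; omega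
  have hswap := sum_Icc_one_pred_neg_one_pow_mul_swap (R := R) hk
    fun a _ => ((p - 1).choose (a - 1) : R)
  simp only [Nat.cast_add, mul_add, sum_add_distrib] at hswap ⊢
  have hp1 : p - 1 = 0 ↔ p = 1 := by simp only [mem_Icc] at hp; omega
  rw [hswap, sum_Icc_neg_one_pow_mul_choose_pred hp']
  simp only [hp1]
  split_ifs <;> norm_num

end Signs

/-- `Z r s` and `Zk` stand for the images of `Z_{r,s}` and `Z_k` under a linear functional on
`D_k`. -/
def IsDoubleShuffle (k : ℕ) (Z : ℕ → ℕ → ℚ) (Zk : ℚ) : Prop :=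
  ∀ r s : ℕ, 1 ≤ r → 1 ≤ s → r + s = k →
    Z r s + Z s r + Zk =
      ∑ p ∈ Icc 1 (k - 1), ((Nat.choose (p - 1) (r - 1) + Nat.choose (p - 1) (s - 1) : ℕ) : ℚ) *
        Z (k - p) p

namespace IsDoubleShuffle

variable {k : ℕ} {Z : ℕ → ℕ → ℚ} {Zk : ℚ}

theorem euler_sum_eq (h : IsDoubleShuffle k Z Zk) (hk : 2 ≤ k) :
    ∑ r ∈ Icc 1 (k - 2), Z r (k - r) = Zk := by
  have hlast :
      ∑ p ∈ Icc 1 (k - 1), ((p - 1).choose (k - 1 - 1) : ℚ) * Z (k - p) p = Z 1 (k - 1) := by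
    rw [sum_eq_single_of_mem (k - 1) (mem_Icc.2 ⟨by omega, le_rfl⟩), Nat.sub_sub_self (by omega)]
    · simp
    · intro p hp hne
      simp only [mem_Icc] at hp
      rw [Nat.choose_eq_zero_of_lt (by omega), Nat.cast_zero, zero_mul]
  have h1 := h 1 (k - 1) le_rfl (by omega) (by omega)
  simp only [Nat.sub_self, Nat.choose_zero_right, Nat.cast_add, Nat.cast_one, add_mul, one_mul,
    sum_add_distrib] at h1
  rw [hlast, sum_Icc_one_pred_swap k Z, sum_Icc_one_pred_eq_add _ hk,
    Nat.sub_sub_self (by omega : 1 ≤ k)] at h1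
  linarith

theorem alternating_sum_eq (h : IsDoubleShuffle k Z Zk) (hk : 2 ≤ k) (hke : Even k) :
    ∑ r ∈ Icc 1 (k - 2), (-1 : ℚ) ^ r * Z r (k - r) = Zk / 2 := by
  have hsum : ∑ r ∈ Icc 1 (k - 1), (-1 : ℚ) ^ r * (Z r (k - r) + Z (k - r) r + Zk)
      = ∑ r ∈ Icc 1 (k - 1), (-1 : ℚ) ^ r * ∑ p ∈ Icc 1 (k - 1),
          (((p - 1).choose (r - 1) + (p - 1).choose (k - r - 1) : ℕ) : ℚ) * Z (k - p) p :=
    sum_congr rfl fun r hr => by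
      simp only [mem_Icc] at hr
      rw [h r (k - r) hr.1 (by omega) (by omega)]
  have hlhs : ∑ r ∈ Icc 1 (k - 1), (-1 : ℚ) ^ r * (Z r (k - r) + Z (k - r) r + Zk)
      = 2 * ∑ r ∈ Icc 1 (k - 1), (-1 : ℚ) ^ r * Z r (k - r) - Zk := by
    simp only [mul_add, sum_add_distrib, ← sum_mul, sum_Icc_one_pred_neg_one_pow_mul_swap hke Z,
      sum_Icc_one_pred_neg_one_pow hke (by omega : k ≠ 0)]
    ring
  have hrhs : ∑ r ∈ Icc 1 (k - 1), (-1 : ℚ) ^ r * ∑ p ∈ Icc 1 (k - 1),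
          (((p - 1).choose (r - 1) + (p - 1).choose (k - r - 1) : ℕ) : ℚ) * Z (k - p) p
      = -2 * Z (k - 1) 1 := by
    simp only [mul_sum, ← mul_assoc]
    rw [sum_comm]
    simp only [← sum_mul]
    rw [sum_congr rfl fun p hp => by
      rw [sum_Icc_one_pred_neg_one_pow_mul_choose_add_choose hke hp]]
    simp only [ite_mul, zero_mul, sum_ite_eq', mem_Icc]
    rw [if_pos (by omega)]
  rw [hlhs, hrhs, sum_Icc_one_pred_eq_add _ hk,
    (Nat.Even.sub_odd (by omega) hke odd_one).neg_one_pow,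
    Nat.sub_sub_self (by omega : 1 ≤ k)] at hsum
  linarith

end IsDoubleShuffle

/-- The restricted sum formulas in the formal double zeta space `D_k` for even `k ≥ 4`:
in any realization `Z, Zk` of the double shuffle relations,
`∑_{r odd, 1≤r≤k-3} Z_{r,k-r} = (1/4) Z_k` and
`∑_{r even, 2≤r≤k-2} Z_{r,k-r} = (3/4) Z_k`. -/
theorem restricted_sum_formulas (k : ℕ) (hk : 4 ≤ k) (hke : Even k)
    (Z : ℕ → ℕ → ℚ) (Zk : ℚ)
    (hrel : ∀ r s : ℕ, 1 ≤ r → 1 ≤ s → r + s = k →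
      Z r s + Z s r + Zk =
        ∑ p ∈ Finset.Icc 1 (k - 1),
          ((Nat.choose (p - 1) (r - 1) + Nat.choose (p - 1) (s - 1) : ℕ) : ℚ) * Z (k - p) p) :
    (∑ r ∈ (Finset.Icc 1 (k - 3)).filter (fun r => Odd r), Z r (k - r)) = (1 / 4) * Zk ∧
    (∑ r ∈ (Finset.Icc 2 (k - 2)).filter (fun r => Even r), Z r (k - r)) = (3 / 4) * Zk := by
  have hodd : (Icc 1 (k - 2)).filter Odd = (Icc 1 (k - 3)).filter Odd := by
    ext r; simp only [mem_filter, mem_Icc, Nat.odd_iff, Nat.even_iff] at hke ⊢; omega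
  have heven : (Icc 1 (k - 2)).filter Even = (Icc 2 (k - 2)).filter Even := by
    ext r; simp only [mem_filter, mem_Icc, Nat.even_iff]; omega
  have hsum := IsDoubleShuffle.euler_sum_eq hrel (by omega)
  have halt := IsDoubleShuffle.alternating_sum_eq hrel (by omega) hke
  rw [sum_eq_sum_filter_even_add_sum_filter_odd, heven, hodd] at hsum
  rw [sum_neg_one_pow_mul_eq_sub, heven, hodd] at halt
  constructor <;> linarith
end

section
/- In the formal double zeta space D_k, Euler's sum formula holds for every k \ge 3: \sum_{r=1}^{k-2} Z_{r, k-r} = Z_k. (It follows from the defining double shuffle relations by summing the relation for (r, s) = (r, k-r) appropriately, or directly from the relation with s = 1.) -/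
/-!
The relation for `(r, s) = (k - 1, 1)` suffices. Its right-hand side splits into
`∑_p binom(p-1, k-2) Z_{k-p,p}`, which only sees `p = k - 1` and equals `Z_{1,k-1}`, and
`∑_p binom(p-1, 0) Z_{k-p,p}`, the full sum `∑_{r=1}^{k-1} Z_{r,k-r}`. Cancelling `Z_{1,k-1}`
and moving the term `Z_{k-1,1}` leaves Euler's formula.
-/

open Finset

theorem Finset.sum_Icc_one_choose_pred_mul {R : Type*} [Semiring R] {n : ℕ} (hn : 1 ≤ n)
    (f : ℕ → R) :
    ∑ p ∈ Icc 1 n, ((p - 1).choose (n - 1) : R) * f p = f n := by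
  rw [sum_eq_single_of_mem n (mem_Icc.2 ⟨hn, le_rfl⟩)]
  · simp
  · intro p hp hpn
    rw [Nat.choose_eq_zero_of_lt (by grind), Nat.cast_zero, zero_mul]

theorem Finset.sum_Icc_reflect {M : Type*} [AddCommMonoid M] (k : ℕ)
    (f : ℕ → ℕ → M) :
    ∑ p ∈ Icc 1 (k - 1), f (k - p) p = ∑ r ∈ Icc 1 (k - 1), f r (k - r) := by
  refine sum_nbij' (k - ·) (k - ·) ?_ ?_ ?_ ?_ ?_ <;> intro p hp <;>
    simp only [mem_Icc] at hp ⊢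
  · omega
  · omega
  · omega
  · omega
  · congr 1; omega

/-- Euler's sum formula in the formal double zeta space `D_k`, `k ≥ 3`:
in any realization `Z, Zk` of the defining double shuffle relations,
`∑_{r=1}^{k-2} Z_{r,k-r} = Z_k`. -/
theorem formal_euler_sum_formula (k : ℕ) (hk : 3 ≤ k)
    (Z : ℕ → ℕ → ℚ) (Zk : ℚ)
    (hrel : ∀ r s : ℕ, 1 ≤ r → 1 ≤ s → r + s = k →
      Z r s + Z s r + Zk =
        ∑ p ∈ Finset.Icc 1 (k - 1),
          ((Nat.choose (p - 1) (r - 1) + Nat.choose (p - 1) (s - 1) : ℕ) : ℚ) * Z (k - p) p) :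
    ∑ r ∈ Finset.Icc 1 (k - 2), Z r (k - r) = Zk := by
  have hrel' := hrel (k - 1) 1 (by omega) le_rfl (by omega)
  simp only [Nat.cast_add, add_mul, sum_add_distrib, Nat.sub_self, Nat.choose_zero_right,
    Nat.cast_one, one_mul, sum_Icc_reflect k Z] at hrel'
  have hsingle :=
    sum_Icc_one_choose_pred_mul (R := ℚ) (n := k - 1) (by omega) (fun p ↦ Z (k - p) p)
  have htop : ∑ r ∈ Icc 1 (k - 1), Z r (k - r) =
      ∑ r ∈ Icc 1 (k - 2), Z r (k - r) + Z (k - 1) 1 := by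
    rw [show k - 1 = k - 2 + 1 by omega, sum_Icc_succ_top (by omega),
      show k - (k - 2 + 1) = 1 by omega]
  rw [show k - (k - 1) = 1 by omega] at hsingle
  linarith
end

section
/- Let k \ge 4 be even and P \in W_{k-2}^+ an even period polynomial. Define a_{r,s} \in Q for r+s = k, r,s \ge 1, by \sum_{r+s=k} binom(k-2, r-1) a_{r,s} X^{r-1} Y^{s-1} = P(X+Y, X). Then a_{r,s} = a_{s,r} whenever r and s are both even, and a_{k-1,1} = 0. -/
open MvPolynomial

local notation "MP" => MvPolynomial (Fin 2) ℚ

lemma aeval_aeval' (u v : Fin 2 → MP) (P : MP) :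
    aeval v (aeval u P) = aeval (fun i => aeval v (u i)) P := by
  rw [← AlgHom.comp_apply, comp_aeval]

lemma aeval_congr' (u v : Fin 2 → MP) (h0 : u 0 = v 0) (h1 : u 1 = v 1) (P : MP) :
    aeval u P = aeval v P := by
  have : u = v := by funext i; fin_cases i <;> assumption
  rw [this]

lemma coeff_diag (c₀ c₁ : ℚ) (m : Fin 2 →₀ ℕ) (P : MP) :
    coeff m (aeval ![c₀ • X 0, c₁ • X 1] P) = c₀ ^ (m 0) * c₁ ^ (m 1) * coeff m P := by
  induction P using MvPolynomial.induction_on' with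
  | add p q hp hq => simp only [map_add, coeff_add, hp, hq]; ring
  | monomial v c =>
    have hm : aeval ![c₀ • X 0, c₁ • X 1] (monomial v c)
        = (c₀ ^ (v 0) * c₁ ^ (v 1)) • monomial v c := by
      rw [aeval_monomial, Finsupp.prod_fintype _ _ (fun i => pow_zero _), Fin.prod_univ_two]
      simp only [Matrix.cons_val_zero, Matrix.cons_val_one, Matrix.head_cons, smul_pow]
      rw [monomial_eq, Finsupp.prod_fintype _ _ (fun i => pow_zero _), Fin.prod_univ_two]
      simp only [algebraMap_eq, smul_eq_C_mul]
      rw [map_mul]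
      ring
    rw [hm, coeff_smul]
    rcases eq_or_ne v m with rfl | hvm
    · simp [coeff_monomial]
    · simp [coeff_monomial, hvm]
/-- Let `k ≥ 4` be even and `P ∈ W_{k-2}⁺`. Define `a_{r,s}` (for `r+s=k`, `r,s ≥ 1`) by
`∑ C(k-2, r-1) a_{r,s} X^{r-1} Y^{s-1} = P(X+Y, X)`.
Then `a_{r,s} = a_{s,r}` whenever `r, s` are both even, and `a_{k-1,1} = 0`. -/
theorem coefficient_symmetry (k : ℕ) (hk : 4 ≤ k) (hke : Even k)
    (P : MvPolynomial (Fin 2) ℚ) (hP : P ∈ WwPlus (k - 2))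
    (a : ℕ → ℕ → ℚ)
    (ha : ∀ r s : ℕ, 1 ≤ r → 1 ≤ s → r + s = k →
      (Nat.choose (k - 2) (r - 1) : ℚ) * a r s =
        MvPolynomial.coeff (Finsupp.single 0 (r - 1) + Finsupp.single 1 (s - 1))
          (slashL 1 1 1 0 P)) :
    (∀ r s : ℕ, 1 ≤ r → 1 ≤ s → r + s = k → Even r → Even s → a r s = a s r) ∧
      a (k - 1) 1 = 0 := by
  obtain ⟨⟨⟨-, hS⟩, hU⟩, hE⟩ := hP
  simp only [SetLike.mem_coe, LinearMap.mem_ker, LinearMap.add_apply, LinearMap.sub_apply,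
    LinearMap.id_apply, sub_eq_zero] at hS hU hE
  -- clean forms of the relations
  have eS : slashL 0 (-1) 1 0 P = aeval ![-(X 1 : MP), X 0] P := by
    show aeval _ P = _; apply aeval_congr' <;> simp
  have eU1 : slashL 1 (-1) 1 0 P = aeval ![(X 0 : MP) - X 1, X 0] P := by
    show aeval _ P = _
    apply aeval_congr' <;> simp [sub_eq_add_neg]
  have eU2 : slashL 0 (-1) 1 (-1) P = aeval ![-(X 1 : MP), X 0 - X 1] P := by
    show aeval _ P = _
    apply aeval_congr' <;> simp [sub_eq_add_neg]
  have eE : slashL (-1) 0 0 1 P = aeval ![((-1 : ℚ)) • (X 0 : MP), (1:ℚ) • X 1] P := by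
    show aeval _ P = _; apply aeval_congr' <;> simp
  have eT : slashL 1 1 1 0 P = aeval ![(X 0 : MP) + X 1, X 0] P := by
    show aeval _ P = _; apply aeval_congr' <;> simp
  rw [eS] at hS
  rw [eU1, eU2] at hU
  have hS' : aeval ![-(X 1 : MP), X 0] P = -P := by linear_combination hS
  have hE'' : aeval ![((-1 : ℚ)) • (X 0 : MP), (1:ℚ) • X 1] P = P := by
    rw [← eE]; exact hE
  have hE' : aeval ![-(X 0 : MP), X 1] P = P := by
    rw [aeval_congr' ![-(X 0 : MP), X 1] ![((-1 : ℚ)) • (X 0 : MP), (1:ℚ) • X 1] (by simp) (by simp)]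
    exact hE''
  -- antisymmetry : P(Y,X) = -P
  have hswap : aeval ![(X 1 : MP), X 0] P = -P := by
    have h1 : aeval ![(X 1 : MP), X 0] (aeval ![-(X 0 : MP), X 1] P)
        = aeval ![-(X 1 : MP), X 0] P := by
      rw [aeval_aeval']; apply aeval_congr' <;> simp
    rw [hE'] at h1; rw [h1, hS']
  -- P(X,X) = 0
  have hdiagP : aeval ![(X 0 : MP), X 0] P = 0 := by
    have h1 : aeval ![(X 0 : MP), X 0] (aeval ![(X 1 : MP), X 0] P)
        = aeval ![(X 0 : MP), X 0] P := by
      rw [aeval_aeval']; apply aeval_congr' <;> simp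
    rw [hswap, map_neg] at h1
    have h2 : aeval ![(X 0 : MP), X 0] P + aeval ![(X 0 : MP), X 0] P = 0 := by
      linear_combination -h1
    exact add_self_eq_zero.mp h2
  set Q : MP := aeval ![(X 0 : MP) + X 1, X 0] P with hQ
  -- Q(Y,X) = Q + P
  have hswapQ : aeval ![(X 1 : MP), X 0] Q = aeval ![(X 0 : MP) + X 1, X 1] P := by
    rw [hQ, aeval_aeval']; apply aeval_congr' <;> simp [add_comm]
  have t2 : aeval ![(X 0 : MP) + X 1, X 1] (aeval ![(X 0 : MP) - X 1, X 0] P)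
      = aeval ![(X 0 : MP), X 0 + X 1] P := by
    rw [aeval_aeval']; apply aeval_congr' <;> simp
  have t3 : aeval ![(X 0 : MP) + X 1, X 1] (aeval ![-(X 1 : MP), (X 0 : MP) - X 1] P)
      = aeval ![-(X 1 : MP), X 0] P := by
    rw [aeval_aeval']; apply aeval_congr' <;> simp
  have hU2 := congrArg (aeval ![(X 0 : MP) + X 1, X 1]) hU
  rw [map_add, map_add, map_zero, t2, t3, hS'] at hU2
  have t4 : aeval ![(X 0 : MP), X 0 + X 1] (aeval ![(X 1 : MP), X 0] P) = Q := by
    rw [hQ, aeval_aeval']; apply aeval_congr' <;> simp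
  have t5 : aeval ![(X 0 : MP), X 0 + X 1] P = -Q := by
    rw [hswap, map_neg] at t4; linear_combination -t4
  have key : aeval ![(X 1 : MP), X 0] Q = Q + P := by
    rw [hswapQ]; rw [t5] at hU2; linear_combination hU2
  -- rename form of the swap
  have hrename : aeval ![(X 1 : MP), X 0] Q = rename ![1, 0] Q := by
    have : (aeval ![(X 1 : MP), X 0] : MP →ₐ[ℚ] MP) = (rename ![1, 0]) := by
      apply MvPolynomial.algHom_ext
      intro i; fin_cases i <;> simp [rename_X]
    rw [this]
  have hinj : Function.Injective (![1, 0] : Fin 2 → Fin 2) := by decide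
  -- coefficients of P with odd first exponent vanish
  have hodd : ∀ m : Fin 2 →₀ ℕ, Odd (m 0) → coeff m P = 0 := by
    intro m hm
    have h1 : coeff m (aeval ![((-1 : ℚ)) • (X 0 : MP), (1:ℚ) • X 1] P) = coeff m P := by
      rw [← eE, hE]
    rw [coeff_diag, hm.neg_one_pow, one_pow] at h1
    linarith [h1]
  constructor
  · intro r s hr hs hrs her hes
    have hb : (k - 2).choose (s - 1) = (k - 2).choose (r - 1) := by
      have h1 : s - 1 = (k - 2) - (r - 1) := by omega
      rw [h1]; exact Nat.choose_symm (by omega)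
    have har := ha r s hr hs hrs
    have has := ha s r hs hr (by omega)
    rw [eT] at har has
    set m : Fin 2 →₀ ℕ := Finsupp.single 0 (r - 1) + Finsupp.single 1 (s - 1) with hm
    set m' : Fin 2 →₀ ℕ := Finsupp.single 0 (s - 1) + Finsupp.single 1 (r - 1) with hm'
    have hmap : Finsupp.mapDomain (![1, 0] : Fin 2 → Fin 2) m' = m := by
      rw [hm', hm, Finsupp.mapDomain_add, Finsupp.mapDomain_single, Finsupp.mapDomain_single]
      simp [add_comm]
    have hcr := coeff_rename_mapDomain (![1, 0] : Fin 2 → Fin 2) hinj Q m'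
    rw [hmap, ← hrename, key, coeff_add] at hcr
    have hm0 : m 0 = r - 1 := by
      rw [hm]; simp [Finsupp.single_apply]
    have hP0 : coeff m P = 0 := by
      apply hodd; rw [hm0]
      exact Nat.Even.sub_odd hr her odd_one
    have hcc : coeff m Q = coeff m' Q := by rw [← hcr, hP0, add_zero]
    have hne : ((k - 2).choose (r - 1) : ℚ) ≠ 0 :=
      Nat.cast_ne_zero.mpr (Nat.choose_pos (by omega)).ne'
    apply mul_left_cancel₀ hne
    rw [har, hcc, ← has, hb]
  · have h1 := ha (k - 1) 1 (by omega) le_rfl (by omega)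
    rw [eT] at h1
    have hch : (k - 2).choose (k - 1 - 1) = 1 := by
      have : k - 1 - 1 = k - 2 := by omega
      rw [this, Nat.choose_self]
    rw [hch] at h1
    -- Q(X,0) = P(X,X) = 0
    have h0 : aeval ![(1:ℚ) • (X 0 : MP), (0:ℚ) • X 1] Q = 0 := by
      rw [hQ, aeval_aeval']
      rw [aeval_congr' _ ![(X 0 : MP), X 0] (by simp) (by simp)]
      exact hdiagP
    set m : Fin 2 →₀ ℕ := Finsupp.single 0 (k - 1 - 1) + Finsupp.single 1 (1 - 1) with hm
    have hm1 : m 1 = 0 := by rw [hm]; simp [Finsupp.single_apply]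
    have hc := coeff_diag 1 0 m Q
    rw [h0, hm1, pow_zero, one_pow, coeff_zero, one_mul, one_mul] at hc
    rw [Nat.cast_one, one_mul] at h1
    rw [h1, ← hc]
end

section
/- (Gangl–Kaneko–Zagier modular relation) Let k \ge 4 be even, P \in W_{k-2}^+, and define a_{r,s} by \sum_{r+s=k} binom(k-2,r-1) a_{r,s} X^{r-1} Y^{s-1} = P(X+Y, X). Then in the formal double zeta space D_k: 3 \sum_{r+s=k, r,s odd} a_{r,s} Z_{r,s} = \sum_{r+s=k, r,s even} a_{r,s} Z_{r,s} + ( \sum_{r+s=k} (-1)^r a_{r,s} ) Z_k. -/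
open MvPolynomial

namespace GKZ

open Finset

lemma slash_comp (a b c d e f g h : ℚ) (p : MvPolynomial (Fin 2) ℚ) :
    slashL a b c d (slashL e f g h p)
      = slashL (e*a+f*c) (e*b+f*d) (g*a+h*c) (g*b+h*d) p := by
  have key : (MvPolynomial.aeval ![a • X 0 + b • X 1, c • X 0 + d • X 1]).comp
      (MvPolynomial.aeval ![e • X 0 + f • X 1, g • X 0 + h • X 1]) =
      (MvPolynomial.aeval ![(e*a+f*c) • X 0 + (e*b+f*d) • X 1,
        (g*a+h*c) • X 0 + (g*b+h*d) • X 1] : MvPolynomial (Fin 2) ℚ →ₐ[ℚ] MvPolynomial (Fin 2) ℚ) := by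
    apply MvPolynomial.algHom_ext
    intro i
    fin_cases i <;>
      simp [Matrix.cons_val_zero, Matrix.cons_val_one, Matrix.head_cons, map_add, map_smul,
        smul_add, smul_smul, aeval_X] <;> module
  simpa [slashL] using congrArg (fun (F : MvPolynomial (Fin 2) ℚ →ₐ[ℚ] MvPolynomial (Fin 2) ℚ) => F p) key

noncomputable def dd (m n : ℕ) : Fin 2 →₀ ℕ := Finsupp.single 0 m + Finsupp.single 1 n

lemma dd_apply0 (m n : ℕ) : dd m n 0 = m := by
  simp [dd, Finsupp.single_apply]

lemma dd_apply1 (m n : ℕ) : dd m n 1 = n := by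
  simp [dd, Finsupp.single_apply]

lemma dd_eq_iff {m n m' n' : ℕ} : dd m n = dd m' n' ↔ m = m' ∧ n = n' := by
  constructor
  · intro h
    refine ⟨?_, ?_⟩
    · have := DFunLike.congr_fun h 0; simpa [dd_apply0] using this
    · have := DFunLike.congr_fun h 1; simpa [dd_apply1] using this
  · rintro ⟨rfl, rfl⟩; rfl

lemma degree_dd_eq (d : Fin 2 →₀ ℕ) : d.degree = d 0 + d 1 := by
  rw [Finsupp.degree_apply]
  rw [show ∑ i ∈ d.support, d i = ∑ i : Fin 2, d i from
    Finset.sum_subset (Finset.subset_univ _)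
      (fun x _ hx => Finsupp.notMem_support_iff.mp hx)]
  exact Fin.sum_univ_two d

lemma slash_monomial (a b c d : ℚ) (i j : ℕ) (t : ℚ) :
    slashL a b c d (monomial (dd i j) t)
      = C t * (a • X 0 + b • X 1)^i * (c • X 0 + d • X 1)^j := by
  simp only [slashL, AlgHom.toLinearMap_apply, aeval_monomial]
  rw [Finsupp.prod_fintype _ _ (fun i => pow_zero _)]
  rw [Fin.prod_univ_two]
  simp [dd_apply0, dd_apply1, algebraMap_eq, mul_assoc]

lemma coeff_CXX (t : ℚ) (α β m n : ℕ) :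
    coeff (dd m n) (C t * (X 0:MvPolynomial (Fin 2) ℚ) ^ α * (X 1:MvPolynomial (Fin 2) ℚ) ^ β)
      = if α = m ∧ β = n then t else 0 := by
  have h : (C t * (X 0:MvPolynomial (Fin 2) ℚ) ^ α * (X 1:MvPolynomial (Fin 2) ℚ) ^ β)
      = monomial (dd α β) t := by
    rw [X_pow_eq_monomial, X_pow_eq_monomial, C_mul_monomial, monomial_mul, dd]
    ring_nf
  rw [h, coeff_monomial]
  by_cases hc : α = m ∧ β = n
  · rw [if_pos (dd_eq_iff.mpr hc), if_pos hc]
  · rw [if_neg (fun hh => hc (dd_eq_iff.mp hh)), if_neg hc]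

lemma hom_expand {w : ℕ} {A : MvPolynomial (Fin 2) ℚ} (hA : A.IsHomogeneous w) :
    A = ∑ j ∈ range (w+1), monomial (dd j (w-j)) (coeff (dd j (w-j)) A) := by
  apply MvPolynomial.ext; intro d
  rw [coeff_sum]
  simp only [coeff_monomial]
  by_cases hd : d 0 + d 1 = w
  · have hd2 : dd (d 0) (d 1) = d := by
      ext i; fin_cases i
      · simpa using dd_apply0 (d 0) (d 1)
      · simpa using dd_apply1 (d 0) (d 1)
    rw [Finset.sum_eq_single (d 0)]
    · have h1 : w - d 0 = d 1 := by omega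
      rw [h1, if_pos hd2, hd2]
    · intro j hj hne
      rw [if_neg]
      intro hEq
      exact hne (by simpa [dd_apply0] using DFunLike.congr_fun hEq 0)
    · intro hmem
      exact absurd (Finset.mem_range.mpr (by omega)) hmem
  · have hz : coeff d A = 0 := by
      apply hA.coeff_eq_zero
      rw [degree_dd_eq]; omega
    rw [hz]
    symm
    apply Finset.sum_eq_zero
    intro j hj
    rw [if_neg]
    intro hEq
    apply hd
    have h0 := DFunLike.congr_fun hEq 0
    have h1 := DFunLike.congr_fun hEq 1
    simp only [dd_apply0, dd_apply1] at h0 h1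
    have hjw : j ≤ w := by have := Finset.mem_range.mp hj; omega
    omega


lemma slash_hom {w : ℕ} {A : MvPolynomial (Fin 2) ℚ} (hA : A.IsHomogeneous w)
    (a b c d : ℚ) : (slashL a b c d A).IsHomogeneous w := by
  have hlin : ∀ u v : ℚ, ((u • X 0 + v • X 1 : MvPolynomial (Fin 2) ℚ)).IsHomogeneous 1 := by
    intro u v
    have h0 : ((u • X 0 : MvPolynomial (Fin 2) ℚ)).IsHomogeneous 1 := by
      rw [← mem_homogeneousSubmodule]
      exact Submodule.smul_mem _ _ ((mem_homogeneousSubmodule _ _).mpr (isHomogeneous_X ℚ (0:Fin 2)))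
    have h1 : ((v • X 1 : MvPolynomial (Fin 2) ℚ)).IsHomogeneous 1 := by
      rw [← mem_homogeneousSubmodule]
      exact Submodule.smul_mem _ _ ((mem_homogeneousSubmodule _ _).mpr (isHomogeneous_X ℚ (1:Fin 2)))
    exact h0.add h1
  conv_lhs => rw [hom_expand hA]
  rw [map_sum]
  apply IsHomogeneous.sum
  intro j hj
  have hjw : j ≤ w := by have := Finset.mem_range.mp hj; omega
  rw [slash_monomial]
  have hp1 := (hlin a b).pow j
  have hp2 := (hlin c d).pow (w-j)
  rw [one_mul] at hp1 hp2
  have hh := (hp1.mul hp2).C_mul (coeff (dd j (w-j)) A)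
  rw [Nat.add_sub_cancel' hjw] at hh
  rw [mul_assoc]
  exact hh

lemma coeff_swap {w : ℕ} {A : MvPolynomial (Fin 2) ℚ} (hA : A.IsHomogeneous w)
    {m : ℕ} (hm : m ≤ w) :
    coeff (dd m (w-m)) (slashL 0 1 1 0 A) = coeff (dd (w-m) m) A := by
  conv_lhs => rw [hom_expand hA]
  rw [map_sum, coeff_sum]
  have hterm : ∀ j ∈ range (w+1),
      coeff (dd m (w-m)) (slashL 0 1 1 0 (monomial (dd j (w-j)) (coeff (dd j (w-j)) A)))
        = if j = w - m then coeff (dd j (w-j)) A else 0 := by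
    intro j hj
    have hjw : j ≤ w := by have := Finset.mem_range.mp hj; omega
    rw [slash_monomial]
    have hE : (C (coeff (dd j (w-j)) A) * ((0:ℚ) • X 0 + (1:ℚ) • X 1)^j
        * ((1:ℚ) • X 0 + (0:ℚ) • X 1)^(w-j) : MvPolynomial (Fin 2) ℚ)
        = C (coeff (dd j (w-j)) A) * (X 0:MvPolynomial (Fin 2) ℚ)^(w-j) * (X 1:MvPolynomial (Fin 2) ℚ)^j := by
      simp only [zero_smul, one_smul, zero_add, add_zero]
      ring
    rw [hE, coeff_CXX]
    by_cases hc : j = w - m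
    · rw [if_pos ⟨by omega, by omega⟩, if_pos hc]
    · rw [if_neg (by omega), if_neg hc]
  rw [Finset.sum_congr rfl hterm, Finset.sum_ite_eq' (range (w+1)) (w-m)]
  rw [if_pos (Finset.mem_range.mpr (by omega))]
  have h3 : w - (w-m) = m := by omega
  rw [h3]

lemma coeff_sign {w : ℕ} {A : MvPolynomial (Fin 2) ℚ} (hA : A.IsHomogeneous w)
    {m : ℕ} (hm : m ≤ w) :
    coeff (dd m (w-m)) (slashL (-1) 0 0 1 A) = (-1:ℚ)^m * coeff (dd m (w-m)) A := by
  conv_lhs => rw [hom_expand hA]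
  rw [map_sum, coeff_sum]
  have hterm : ∀ j ∈ range (w+1),
      coeff (dd m (w-m)) (slashL (-1) 0 0 1 (monomial (dd j (w-j)) (coeff (dd j (w-j)) A)))
        = if j = m then (-1:ℚ)^m * coeff (dd j (w-j)) A else 0 := by
    intro j hj
    rw [slash_monomial]
    have hE : (C (coeff (dd j (w-j)) A) * ((-1:ℚ) • X 0 + (0:ℚ) • X 1)^j
        * ((0:ℚ) • X 0 + (1:ℚ) • X 1)^(w-j) : MvPolynomial (Fin 2) ℚ)
        = C ((-1:ℚ)^j * coeff (dd j (w-j)) A) * (X 0:MvPolynomial (Fin 2) ℚ)^j * (X 1:MvPolynomial (Fin 2) ℚ)^(w-j) := by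
      simp only [zero_smul, one_smul, zero_add, add_zero, neg_smul, map_mul, map_pow, map_neg, map_one]
      ring
    rw [hE, coeff_CXX]
    by_cases hc : j = m
    · subst hc; rw [if_pos ⟨rfl, rfl⟩, if_pos rfl]
    · rw [if_neg (by tauto), if_neg hc]
  rw [Finset.sum_congr rfl hterm, Finset.sum_ite_eq' (range (w+1)) m]
  rw [if_pos (Finset.mem_range.mpr (by omega))]


lemma coeff_V_mono {w : ℕ} (t : ℚ) {j m : ℕ} (hj : j ≤ w) (hm : m ≤ w) :
    coeff (dd m (w-m)) (slashL 1 0 (-1) 1 (monomial (dd j (w-j)) t))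
      = (if j ≤ m then (-1:ℚ)^(m-j) * ((w-j).choose (w-m) : ℚ) else 0) * t := by
  rw [slash_monomial]
  have hE1 : ((1:ℚ) • X 0 + (0:ℚ) • X 1 : MvPolynomial (Fin 2) ℚ) = X 0 := by simp
  have hE2 : ((-1:ℚ) • X 0 + (1:ℚ) • X 1 : MvPolynomial (Fin 2) ℚ) = -(X 0) + X 1 := by
    simp
  rw [hE1, hE2, add_pow, Finset.mul_sum, coeff_sum]
  have hterm : ∀ i ∈ range (w-j+1),
      coeff (dd m (w-m)) (C t * (X 0:MvPolynomial (Fin 2) ℚ) ^ j *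
        ((-(X 0:MvPolynomial (Fin 2) ℚ))^i * (X 1:MvPolynomial (Fin 2) ℚ)^(w-j-i) *
          ((w-j).choose i : MvPolynomial (Fin 2) ℚ)))
        = if i = m - j ∧ j ≤ m then (-1:ℚ)^(m-j) * ((w-j).choose (w-m):ℚ) * t else 0 := by
    intro i hi
    have hiw : i ≤ w - j := by have := Finset.mem_range.mp hi; omega
    have hE3 : (C t * (X 0:MvPolynomial (Fin 2) ℚ) ^ j *
        ((-(X 0:MvPolynomial (Fin 2) ℚ))^i * (X 1:MvPolynomial (Fin 2) ℚ)^(w-j-i) *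
          ((w-j).choose i : MvPolynomial (Fin 2) ℚ)))
        = C (t * (-1:ℚ)^i * ((w-j).choose i : ℚ)) * (X 0:MvPolynomial (Fin 2) ℚ) ^ (j+i) *
            (X 1:MvPolynomial (Fin 2) ℚ)^(w-j-i) := by
      have hc1 : ((w-j).choose i : MvPolynomial (Fin 2) ℚ) = C (((w-j).choose i : ℚ)) := by
        rw [map_natCast]
      rw [hc1, map_mul, map_mul, map_pow, map_neg, map_one, neg_pow, pow_add]
      ring
    rw [hE3, coeff_CXX]
    by_cases hc : i = m - j ∧ j ≤ m
    · obtain ⟨hc1, hc2⟩ := hc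
      rw [if_pos ⟨by omega, by omega⟩, if_pos ⟨hc1, hc2⟩]
      subst hc1
      rw [show m - j = (w-j) - (w-m) from by omega, Nat.choose_symm (by omega)]
      ring
    · rw [if_neg, if_neg hc]
      rintro ⟨h1, h2⟩
      exact hc ⟨by omega, by omega⟩
  rw [Finset.sum_congr rfl hterm]
  by_cases hjm : j ≤ m
  · simp only [hjm, and_true]
    rw [Finset.sum_ite_eq' (range (w-j+1)) (m-j)]
    rw [if_pos (Finset.mem_range.mpr (by omega)), if_pos trivial]
  · rw [if_neg hjm, Finset.sum_eq_zero, zero_mul]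
    intro i _
    rw [if_neg (fun h => hjm h.2)]

lemma coeff_V {w : ℕ} {A : MvPolynomial (Fin 2) ℚ} (hA : A.IsHomogeneous w)
    {m : ℕ} (hm : m ≤ w) :
    coeff (dd m (w-m)) (slashL 1 0 (-1) 1 A)
      = ∑ j ∈ range (w+1),
          (if j ≤ m then (-1:ℚ)^(m-j) * ((w-j).choose (w-m) : ℚ) else 0)
            * coeff (dd j (w-j)) A := by
  conv_lhs => rw [hom_expand hA]
  rw [map_sum, coeff_sum]
  apply Finset.sum_congr rfl
  intro j hj
  exact coeff_V_mono _ (by have := Finset.mem_range.mp hj; omega) hm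


lemma choose_trin {j m w : ℕ} (h1 : j ≤ m) (h2 : m ≤ w) :
    ((w.choose m : ℚ)) * (m.choose j) = (w.choose j) * ((w-j).choose (w-m)) := by
  rw [Nat.cast_choose ℚ h2, Nat.cast_choose ℚ h1, Nat.cast_choose ℚ (show j ≤ w by omega),
    Nat.cast_choose ℚ (show w - m ≤ w - j by omega)]
  rw [show (w-j) - (w-m) = m - j from by omega]
  have e1 : ((m.factorial : ℚ)) ≠ 0 := Nat.cast_ne_zero.mpr (Nat.factorial_ne_zero _)
  have e2 : ((j.factorial : ℚ)) ≠ 0 := Nat.cast_ne_zero.mpr (Nat.factorial_ne_zero _)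
  have e3 : (((w-m).factorial : ℚ)) ≠ 0 := Nat.cast_ne_zero.mpr (Nat.factorial_ne_zero _)
  have e4 : (((m-j).factorial : ℚ)) ≠ 0 := Nat.cast_ne_zero.mpr (Nat.factorial_ne_zero _)
  have e5 : (((w-j).factorial : ℚ)) ≠ 0 := Nat.cast_ne_zero.mpr (Nat.factorial_ne_zero _)
  field_simp

lemma neg_one_pow_sub {k p : ℕ} (hk : Even k) (hp : p ≤ k) :
    ((-1:ℚ))^(k-p) = (-1:ℚ)^p := by
  have hiff : Even (k - p) ↔ Even p := by
    rw [Nat.even_sub hp]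
    simp [hk]
  rcases Nat.even_or_odd p with h | h
  · rw [h.neg_one_pow, (hiff.mpr h).neg_one_pow]
  · have h2 : Odd (k - p) := by
      rw [← Nat.not_even_iff_odd, hiff, Nat.not_even_iff_odd]
      exact h
    rw [h.neg_one_pow, h2.neg_one_pow]

lemma sum_reflect {k : ℕ} (hk : 2 ≤ k) (g : ℕ → ℚ) :
    ∑ p ∈ Icc 1 (k-1), g p = ∑ p ∈ Icc 1 (k-1), g (k-p) := by
  have himg : Finset.image (fun p => k - p) (Icc 1 (k-1)) = Icc 1 (k-1) := by
    ext x
    simp only [Finset.mem_image, Finset.mem_Icc]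
    constructor
    · rintro ⟨y, ⟨hy1, hy2⟩, rfl⟩; omega
    · intro ⟨h1, h2⟩; exact ⟨k - x, ⟨by omega, by omega⟩, by omega⟩
  conv_lhs => rw [← himg]
  rw [Finset.sum_image]
  intro x hx y hy hxy
  have hx' := Finset.mem_Icc.mp hx
  have hy' := Finset.mem_Icc.mp hy
  simp only at hxy
  omega


end GKZ

open GKZ Finset in
/-- (Gangl–Kaneko–Zagier modular relation.) Let `k ≥ 4` be even, `P ∈ W_{k-2}⁺`, and
define `a_{r,s}` by `∑ C(k-2,r-1) a_{r,s} X^{r-1} Y^{s-1} = P(X+Y, X)`.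
Then in the formal double zeta space (i.e. in any realization `Z, Zk` of the
double shuffle relations):
`3 ∑_{r+s=k, r,s odd} a_{r,s} Z_{r,s}
  = ∑_{r+s=k, r,s even} a_{r,s} Z_{r,s} + (∑_{r+s=k} (-1)^r a_{r,s}) Z_k`. -/
theorem gangl_kaneko_zagier (k : ℕ) (hk : 4 ≤ k) (hke : Even k)
    (P : MvPolynomial (Fin 2) ℚ) (hP : P ∈ WwPlus (k - 2))
    (a : ℕ → ℕ → ℚ)
    (ha : ∀ r s : ℕ, 1 ≤ r → 1 ≤ s → r + s = k →
      (Nat.choose (k - 2) (r - 1) : ℚ) * a r s =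
        MvPolynomial.coeff (Finsupp.single 0 (r - 1) + Finsupp.single 1 (s - 1))
          (slashL 1 1 1 0 P))
    (Z : ℕ → ℕ → ℚ) (Zk : ℚ)
    (hrel : ∀ r s : ℕ, 1 ≤ r → 1 ≤ s → r + s = k →
      Z r s + Z s r + Zk =
        ∑ p ∈ Finset.Icc 1 (k - 1),
          ((Nat.choose (p - 1) (r - 1) + Nat.choose (p - 1) (s - 1) : ℕ) : ℚ) * Z (k - p) p) :
    3 * ∑ r ∈ (Finset.Icc 1 (k - 1)).filter (fun r => Odd r ∧ Odd (k - r)),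
          a r (k - r) * Z r (k - r) =
      (∑ r ∈ (Finset.Icc 1 (k - 1)).filter (fun r => Even r ∧ Even (k - r)),
          a r (k - r) * Z r (k - r)) +
        (∑ r ∈ Finset.Icc 1 (k - 1), (-1 : ℚ) ^ r * a r (k - r)) * Zk := by
  set w := k - 2 with hw
  have hPhom : P.IsHomogeneous (k-2) := by
    have := hP.1.1.1
    rwa [Vw, SetLike.mem_coe, mem_homogeneousSubmodule] at this
  have hS : slashL 0 (-1) 1 0 P = -P := by
    have h := hP.1.1.2
    rw [SetLike.mem_coe, LinearMap.mem_ker, LinearMap.add_apply, LinearMap.id_apply] at h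
    exact eq_neg_of_add_eq_zero_right h
  have hU : P + slashL 1 (-1) 1 0 P + slashL 0 (-1) 1 (-1) P = 0 := by
    have h := hP.1.2
    rw [SetLike.mem_coe, LinearMap.mem_ker, LinearMap.add_apply, LinearMap.add_apply, LinearMap.id_apply] at h
    exact h
  have hI : slashL (-1) 0 0 1 P = P := by
    have h := hP.2
    rw [SetLike.mem_coe, LinearMap.mem_ker, LinearMap.sub_apply, LinearMap.id_apply] at h
    exact sub_eq_zero.mp h
  have hnegI : slashL (-1) 0 0 (-1) P = P := by
    have h1 : slashL 0 (-1) 1 0 (slashL 0 (-1) 1 0 P) = slashL (-1) 0 0 (-1) P := by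
      rw [slash_comp]; norm_num
    rw [← h1, hS, map_neg, hS, neg_neg]
  have hPeps : slashL 0 1 1 0 P = -P := by
    have h1 : slashL 0 (-1) 1 0 (slashL (-1) 0 0 1 P) = slashL 0 1 1 0 P := by
      rw [slash_comp]; norm_num
    rw [← h1, hI, hS]
  have hR1 : slashL 0 (-1) 1 0 (slashL 1 (-1) 1 0 P) = slashL 1 1 0 1 P := by
    have h1 : slashL 0 (-1) 1 0 (slashL 1 (-1) 1 0 P) = slashL (-1) (-1) 0 (-1) P := by
      rw [slash_comp]; norm_num
    have h2 : slashL 1 1 0 1 (slashL (-1) 0 0 (-1) P) = slashL (-1) (-1) 0 (-1) P := by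
      rw [slash_comp]; norm_num
    rw [h1, ← h2, hnegI]
  have hR2 : slashL 0 (-1) 1 0 (slashL 0 (-1) 1 (-1) P) = slashL 1 0 1 1 P := by
    have h1 : slashL 0 (-1) 1 0 (slashL 0 (-1) 1 (-1) P) = slashL (-1) 0 (-1) (-1) P := by
      rw [slash_comp]; norm_num
    have h2 : slashL 1 0 1 1 (slashL (-1) 0 0 (-1) P) = slashL (-1) 0 (-1) (-1) P := by
      rw [slash_comp]; norm_num
    rw [h1, ← h2, hnegI]
  have hRprime : slashL 1 0 1 1 P = P - slashL 1 1 0 1 P := by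
    have h := congrArg (fun A => slashL 0 (-1) 1 0 A) hU
    simp only [map_add, map_zero] at h
    rw [hS, hR1, hR2] at h
    linear_combination h
  have hQR : slashL 1 1 1 0 P = slashL 1 1 0 1 P - P := by
    have h1 : slashL 1 0 1 1 (slashL 0 1 1 0 P) = slashL 1 1 1 0 P := by
      rw [slash_comp]; norm_num
    rw [← h1, hPeps, map_neg, hRprime]
    ring
  have hVQ : slashL 1 0 (-1) 1 (slashL 1 1 1 0 P) = -P := by
    have h1 : slashL 1 0 (-1) 1 (slashL 1 1 1 0 P) = slashL 0 1 1 0 P := by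
      rw [slash_comp]; norm_num
    rw [h1, hPeps]
  have hVR : slashL 1 0 (-1) 1 (slashL 1 1 0 1 P) = slashL 0 (-1) 1 (-1) P := by
    have h1 : slashL 1 0 (-1) 1 (slashL 1 1 0 1 P) = slashL 0 1 (-1) 1 P := by
      rw [slash_comp]; norm_num
    have h2 : slashL 0 (-1) 1 (-1) (slashL (-1) 0 0 (-1) P) = slashL 0 1 (-1) 1 P := by
      rw [slash_comp]; norm_num
    rw [h1, ← h2, hnegI]
  have hiR : slashL (-1) 0 0 1 (slashL 1 1 0 1 P) = -(slashL 0 (-1) 1 (-1) P) := by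
    have h1 : slashL (-1) 0 0 1 (slashL 1 1 0 1 P) = slashL (-1) 1 0 1 P := by
      rw [slash_comp]; norm_num
    have h2 : slashL 1 (-1) 0 1 (slashL (-1) 0 0 1 P) = slashL (-1) 1 0 1 P := by
      rw [slash_comp]; norm_num
    have h3 : slashL 1 (-1) 0 1 (slashL (-1) 0 0 (-1) P) = slashL (-1) 1 0 (-1) P := by
      rw [slash_comp]; norm_num
    have h4 : slashL 0 (-1) 1 (-1) (slashL 0 (-1) 1 0 P) = slashL (-1) 1 0 (-1) P := by
      rw [slash_comp]; norm_num
    rw [h1, ← h2, hI]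
    calc slashL 1 (-1) 0 1 P = slashL 1 (-1) 0 1 (slashL (-1) 0 0 (-1) P) := by rw [hnegI]
      _ = slashL (-1) 1 0 (-1) P := h3
      _ = slashL 0 (-1) 1 (-1) (slashL 0 (-1) 1 0 P) := h4.symm
      _ = -(slashL 0 (-1) 1 (-1) P) := by rw [hS, map_neg]
  have hRQ : slashL 0 1 1 0 (slashL 1 1 1 0 P) = slashL 1 1 0 1 P := by
    rw [slash_comp]; norm_num
  -- homogeneity
  have hQhom : (slashL 1 1 1 0 P).IsHomogeneous w := slash_hom hPhom 1 1 1 0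
  have hRhom : (slashL 1 1 0 1 P).IsHomogeneous w := slash_hom hPhom 1 1 0 1
  have hFhom : (slashL 1 1 0 1 P + slashL 1 1 1 0 P).IsHomogeneous w := hRhom.add hQhom
  have hVF : slashL 1 0 (-1) 1 (slashL 1 1 0 1 P + slashL 1 1 1 0 P)
      = slashL 0 (-1) 1 (-1) P - P := by
    rw [map_add, hVR, hVQ]; ring
  set ff : ℕ → ℚ :=
    fun j => MvPolynomial.coeff (dd j (w-j)) (slashL 1 1 0 1 P + slashL 1 1 1 0 P) with hffdef
  set rr : ℕ → ℚ := fun j => MvPolynomial.coeff (dd j (w-j)) (slashL 1 1 0 1 P) with hrrdef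
  have M1 : ∀ m, m ≤ w → ff m - ∑ j ∈ range (w+1),
      (if j ≤ m then (-1:ℚ)^(m-j) * (((w-j).choose (w-m) : ℕ):ℚ) else 0) * ff j
        = (2 + (-1:ℚ)^m) * rr m := by
    intro m hm
    have hc1 := congrArg (MvPolynomial.coeff (dd m (w-m))) hVF
    rw [coeff_V hFhom hm, coeff_sub] at hc1
    have hc2 := congrArg (MvPolynomial.coeff (dd m (w-m))) hiR
    rw [coeff_sign hRhom hm, coeff_neg] at hc2
    have hc3 := congrArg (MvPolynomial.coeff (dd m (w-m))) hQR
    rw [coeff_sub] at hc3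
    have hfm : ff m = rr m + MvPolynomial.coeff (dd m (w-m)) (slashL 1 1 1 0 P) := by
      show MvPolynomial.coeff _ (_ + _) = _
      rw [coeff_add]
    linear_combination hfm - hc1 + hc3 - hc2
  have hQcoeff : ∀ j, j ≤ w → MvPolynomial.coeff (dd j (w-j)) (slashL 1 1 1 0 P)
      = ((w.choose j : ℕ):ℚ) * a (j+1) (k-j-1) := by
    intro j hj
    have h := ha (j+1) (k-j-1) (by omega) (by omega) (by omega)
    rw [show j+1-1 = j from by omega, show k-j-1-1 = w-j from by omega] at h
    exact h.symm
  have hRcoeff : ∀ m, m ≤ w → rr m = ((w.choose m : ℕ):ℚ) * a (k-m-1) (m+1) := by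
    intro m hm
    have h1 : rr m = MvPolynomial.coeff (dd (w-m) m) (slashL 1 1 1 0 P) := by
      show MvPolynomial.coeff (dd m (w-m)) (slashL 1 1 0 1 P) = _
      rw [← hRQ, coeff_swap hQhom hm]
    have h2 := hQcoeff (w-m) (by omega)
    rw [show w-(w-m) = m from by omega] at h2
    rw [h1, h2, show (w-m)+1 = k-m-1 from by omega, show k-(w-m)-1 = m+1 from by omega,
        Nat.choose_symm hm]
  have hfj : ∀ j, j ≤ w → ff j
      = ((w.choose j : ℕ):ℚ) * (a (j+1) (k-j-1) + a (k-j-1) (j+1)) := by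
    intro j hj
    have h1 : ff j = rr j + MvPolynomial.coeff (dd j (w-j)) (slashL 1 1 1 0 P) := by
      show MvPolynomial.coeff _ (_ + _) = _
      rw [coeff_add]
    rw [h1, hRcoeff j hj, hQcoeff j hj]
    ring
  set nu : ℕ → ℚ := fun p => (-1:ℚ)^(p+1) * (a p (k-p) + a (k-p) p) with hnudef
  have hff_nu : ∀ j, j ≤ w → ff j = (-1:ℚ)^j * ((w.choose j : ℕ):ℚ) * nu (j+1) := by
    intro j hj
    have h11 : (-1:ℚ)^j * (-1:ℚ)^j = 1 := by
      rw [← pow_add]; exact Even.neg_one_pow ⟨j, rfl⟩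
    have hnu1 : nu (j+1) = (-1:ℚ)^(j+1+1) * (a (j+1) (k-(j+1)) + a (k-(j+1)) (j+1)) := rfl
    have hp : (-1:ℚ)^(j+1+1) = (-1:ℚ)^j := by
      rw [pow_succ, pow_succ]; ring
    rw [hfj j hj, hnu1, show k-(j+1) = k-j-1 from by omega, hp]
    linear_combination (-(((w.choose j : ℕ):ℚ) * (a (j+1) (k-j-1) + a (k-j-1) (j+1)))) * h11
  have KEY : ∀ q ∈ Icc 1 (k-1), nu q - ∑ p ∈ Icc 1 (k-1), (((q-1).choose (p-1) : ℕ):ℚ) * nu p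
      = (if Odd q then (3:ℚ) else -1) * a (k-q) q := by
    intro q hq
    obtain ⟨hq1, hq2⟩ := Finset.mem_Icc.mp hq
    have hmw : q - 1 ≤ w := by omega
    have hsum : ∑ p ∈ Icc 1 (k-1), (((q-1).choose (p-1) : ℕ):ℚ) * nu p
        = ∑ j ∈ range (w+1), (((q-1).choose j : ℕ):ℚ) * nu (j+1) := by
      rw [show Icc 1 (k-1) = Ico 1 k from by rw [← Finset.Ico_add_one_right_eq_Icc]; congr 1; omega]
      rw [Finset.sum_Ico_eq_sum_range]
      refine Finset.sum_congr (by congr 1; omega) ?_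
      intro j _
      rw [show 1+j-1 = j from by omega, Nat.add_comm 1 j]
    set m := q - 1 with hmdef
    have hpoint : ∀ j ∈ range (w+1),
        (if j ≤ m then (-1:ℚ)^(m-j) * (((w-j).choose (w-m) : ℕ):ℚ) else 0) * ff j
          = (-1:ℚ)^m * ((w.choose m : ℕ):ℚ) * ((((m.choose j : ℕ)):ℚ) * nu (j+1)) := by
      intro j hj
      have hjw : j ≤ w := by have := Finset.mem_range.mp hj; omega
      rw [hff_nu j hjw]
      by_cases hc : j ≤ m
      · rw [if_pos hc]
        have hsign : (-1:ℚ)^(m-j) * (-1:ℚ)^j = (-1:ℚ)^m := by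
          rw [← pow_add, show m-j+j = m from by omega]
        have hchoose := choose_trin hc hmw
        linear_combination (((w-j).choose (w-m) : ℕ):ℚ) * ((w.choose j : ℕ):ℚ) * nu (j+1) * hsign - (-1:ℚ)^m * nu (j+1) * hchoose
      · rw [if_neg hc, Nat.choose_eq_zero_of_lt (show m < j from by omega)]
        push_cast
        ring
    have hM := M1 m hmw
    rw [Finset.sum_congr rfl hpoint, ← Finset.mul_sum, hff_nu m hmw, hRcoeff m hmw] at hM
    rw [hsum]
    have hCne : (((w.choose m : ℕ)):ℚ) ≠ 0 := Nat.cast_ne_zero.mpr (Nat.choose_pos hmw).ne'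
    have hq1m : q = m + 1 := by omega
    have hkm : k - m - 1 = k - q := by omega
    rw [hkm, ← hq1m] at hM
    rcases Nat.even_or_odd m with hme | hmo
    · have hOdd : Odd q := by rw [hq1m]; exact hme.add_one
      rw [if_pos hOdd]
      have hm1 : (-1:ℚ)^m = 1 := hme.neg_one_pow
      rw [hm1] at hM
      refine mul_left_cancel₀ hCne ?_
      linear_combination hM
    · have hEven : ¬ Odd q := by
        rw [hq1m]
        exact Nat.not_odd_iff_even.mpr hmo.add_one
      rw [if_neg hEven]
      have hm1 : (-1:ℚ)^m = -1 := hmo.neg_one_pow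
      rw [hm1] at hM
      refine mul_left_cancel₀ hCne ?_
      linear_combination (-1 : ℚ) * hM
  -- palindromicity of nu
  have hnupal : ∀ p ∈ Icc 1 (k-1), nu (k-p) = nu p := by
    intro p hp
    obtain ⟨h1, h2⟩ := Finset.mem_Icc.mp hp
    show (-1:ℚ)^(k-p+1) * (a (k-p) (k-(k-p)) + a (k-(k-p)) (k-p)) = _
    rw [show k-(k-p) = p from by omega]
    have hsg : (-1:ℚ)^(k-p+1) = (-1:ℚ)^(p+1) := by
      rw [pow_succ, pow_succ, neg_one_pow_sub hke (by omega)]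
    rw [hsg]
    show _ = (-1:ℚ)^(p+1) * (a p (k-p) + a (k-p) p)
    ring
  have SUMKEY : ∑ p ∈ Icc 1 (k-1), nu p / 2
      = - ∑ r ∈ Icc 1 (k-1), (-1:ℚ)^r * a r (k-r) := by
    have h1 : ∑ p ∈ Icc 1 (k-1), (-1:ℚ)^(p+1) * a (k-p) p / 2
        = ∑ p ∈ Icc 1 (k-1), (-1:ℚ)^(p+1) * a p (k-p) / 2 := by
      rw [sum_reflect (by omega) (fun p => (-1:ℚ)^(p+1) * a (k-p) p / 2)]
      apply Finset.sum_congr rfl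
      intro p hp
      obtain ⟨hp1, hp2⟩ := Finset.mem_Icc.mp hp
      rw [show k-(k-p) = p from by omega, pow_succ, pow_succ,
        neg_one_pow_sub hke (by omega)]
    calc ∑ p ∈ Icc 1 (k-1), nu p / 2
        = ∑ p ∈ Icc 1 (k-1), ((-1:ℚ)^(p+1) * a p (k-p) / 2
            + (-1:ℚ)^(p+1) * a (k-p) p / 2) := by
          apply Finset.sum_congr rfl; intro p _
          show (-1:ℚ)^(p+1) * (a p (k-p) + a (k-p) p) / 2 = _
          ring
      _ = ∑ p ∈ Icc 1 (k-1), (-1:ℚ)^(p+1) * a p (k-p) / 2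
            + ∑ p ∈ Icc 1 (k-1), (-1:ℚ)^(p+1) * a (k-p) p / 2 := Finset.sum_add_distrib
      _ = ∑ p ∈ Icc 1 (k-1), ((-1:ℚ)^(p+1) * a p (k-p) / 2
            + (-1:ℚ)^(p+1) * a p (k-p) / 2) := by rw [h1, Finset.sum_add_distrib]
      _ = - ∑ r ∈ Icc 1 (k-1), (-1:ℚ)^r * a r (k-r) := by
          rw [← Finset.sum_neg_distrib]
          apply Finset.sum_congr rfl; intro p _
          ring
  -- combination of the double shuffle relations
  have hcomb : ∑ p ∈ Icc 1 (k-1), nu p / 2 * (Z (k-p) p + Z p (k-p) + Zk)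
      = ∑ p ∈ Icc 1 (k-1), nu p / 2 * (∑ q ∈ Icc 1 (k-1),
          (((q-1).choose (k-p-1) + (q-1).choose (p-1) : ℕ):ℚ) * Z (k-q) q) := by
    apply Finset.sum_congr rfl
    intro p hp
    obtain ⟨hp1, hp2⟩ := Finset.mem_Icc.mp hp
    rw [hrel (k-p) p (by omega) hp1 (by omega)]
  have hLHS : ∑ p ∈ Icc 1 (k-1), nu p / 2 * (Z (k-p) p + Z p (k-p) + Zk)
      = (∑ p ∈ Icc 1 (k-1), nu p * Z (k-p) p)
          + (∑ p ∈ Icc 1 (k-1), nu p / 2) * Zk := by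
    have e1 : ∑ p ∈ Icc 1 (k-1), nu p / 2 * Z p (k-p)
        = ∑ p ∈ Icc 1 (k-1), nu p / 2 * Z (k-p) p := by
      rw [sum_reflect (by omega) (fun p => nu p / 2 * Z p (k-p))]
      apply Finset.sum_congr rfl
      intro p hp
      obtain ⟨hp1, hp2⟩ := Finset.mem_Icc.mp hp
      rw [show k-(k-p) = p from by omega, hnupal p hp]
    calc ∑ p ∈ Icc 1 (k-1), nu p / 2 * (Z (k-p) p + Z p (k-p) + Zk)
        = ∑ p ∈ Icc 1 (k-1), (nu p / 2 * Z (k-p) p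
            + nu p / 2 * Z p (k-p) + nu p / 2 * Zk) := by
          apply Finset.sum_congr rfl; intro p _; ring
      _ = (∑ p ∈ Icc 1 (k-1), (nu p / 2 * Z (k-p) p + nu p / 2 * Z p (k-p)))
            + ∑ p ∈ Icc 1 (k-1), nu p / 2 * Zk := Finset.sum_add_distrib
      _ = (∑ p ∈ Icc 1 (k-1), nu p / 2 * Z (k-p) p)
            + (∑ p ∈ Icc 1 (k-1), nu p / 2 * Z p (k-p))
            + ∑ p ∈ Icc 1 (k-1), nu p / 2 * Zk := by rw [Finset.sum_add_distrib]
      _ = (∑ p ∈ Icc 1 (k-1), (nu p / 2 * Z (k-p) p + nu p / 2 * Z (k-p) p))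
            + (∑ p ∈ Icc 1 (k-1), nu p / 2) * Zk := by
          rw [e1, Finset.sum_add_distrib, Finset.sum_mul]
      _ = (∑ p ∈ Icc 1 (k-1), nu p * Z (k-p) p)
            + (∑ p ∈ Icc 1 (k-1), nu p / 2) * Zk := by
          congr 1
          apply Finset.sum_congr rfl; intro p _; ring
  have hRHS : ∑ p ∈ Icc 1 (k-1), nu p / 2 * (∑ q ∈ Icc 1 (k-1),
        (((q-1).choose (k-p-1) + (q-1).choose (p-1) : ℕ):ℚ) * Z (k-q) q)
      = ∑ q ∈ Icc 1 (k-1),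
          (∑ p ∈ Icc 1 (k-1), (((q-1).choose (p-1) : ℕ):ℚ) * nu p) * Z (k-q) q := by
    calc ∑ p ∈ Icc 1 (k-1), nu p / 2 * (∑ q ∈ Icc 1 (k-1),
          (((q-1).choose (k-p-1) + (q-1).choose (p-1) : ℕ):ℚ) * Z (k-q) q)
        = ∑ p ∈ Icc 1 (k-1), ∑ q ∈ Icc 1 (k-1), nu p / 2 *
            ((((q-1).choose (k-p-1) + (q-1).choose (p-1) : ℕ):ℚ) * Z (k-q) q) := by
          apply Finset.sum_congr rfl; intro p _; rw [Finset.mul_sum]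
      _ = ∑ q ∈ Icc 1 (k-1), ∑ p ∈ Icc 1 (k-1), nu p / 2 *
            ((((q-1).choose (k-p-1) + (q-1).choose (p-1) : ℕ):ℚ) * Z (k-q) q) :=
          Finset.sum_comm
      _ = ∑ q ∈ Icc 1 (k-1),
            (∑ p ∈ Icc 1 (k-1), (((q-1).choose (p-1) : ℕ):ℚ) * nu p) * Z (k-q) q := by
          apply Finset.sum_congr rfl
          intro q hq
          rw [Finset.sum_mul]
          have e2 : ∑ p ∈ Icc 1 (k-1),
              nu p / 2 * ((((q-1).choose (k-p-1) : ℕ):ℚ) * Z (k-q) q)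
              = ∑ p ∈ Icc 1 (k-1),
                  nu p / 2 * ((((q-1).choose (p-1) : ℕ):ℚ) * Z (k-q) q) := by
            rw [sum_reflect (by omega)
              (fun p => nu p / 2 * ((((q-1).choose (k-p-1) : ℕ):ℚ) * Z (k-q) q))]
            apply Finset.sum_congr rfl
            intro p hp
            obtain ⟨hp1, hp2⟩ := Finset.mem_Icc.mp hp
            rw [show k-(k-p)-1 = p-1 from by omega, hnupal p hp]
          calc ∑ p ∈ Icc 1 (k-1), nu p / 2 *
                ((((q-1).choose (k-p-1) + (q-1).choose (p-1) : ℕ):ℚ) * Z (k-q) q)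
              = ∑ p ∈ Icc 1 (k-1), (nu p / 2 * ((((q-1).choose (k-p-1) : ℕ):ℚ) * Z (k-q) q)
                  + nu p / 2 * ((((q-1).choose (p-1) : ℕ):ℚ) * Z (k-q) q)) := by
                apply Finset.sum_congr rfl; intro p _
                push_cast
                ring
            _ = ∑ p ∈ Icc 1 (k-1), (nu p / 2 * ((((q-1).choose (p-1) : ℕ):ℚ) * Z (k-q) q)
                  + nu p / 2 * ((((q-1).choose (p-1) : ℕ):ℚ) * Z (k-q) q)) := by
                rw [Finset.sum_add_distrib, e2, ← Finset.sum_add_distrib]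
            _ = ∑ p ∈ Icc 1 (k-1), (((q-1).choose (p-1) : ℕ):ℚ) * nu p * Z (k-q) q := by
                apply Finset.sum_congr rfl; intro p _; ring
  have hfinal : (∑ q ∈ Icc 1 (k-1), nu q * Z (k-q) q)
      + (∑ p ∈ Icc 1 (k-1), nu p / 2) * Zk
      = ∑ q ∈ Icc 1 (k-1),
          (∑ p ∈ Icc 1 (k-1), (((q-1).choose (p-1) : ℕ):ℚ) * nu p) * Z (k-q) q := by
    rw [← hLHS, ← hRHS]; exact hcomb
  have hG : ∑ q ∈ Icc 1 (k-1), ((if Odd q then (3:ℚ) else -1) * a (k-q) q) * Z (k-q) q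
      = - ((∑ p ∈ Icc 1 (k-1), nu p / 2) * Zk) := by
    have hKk : ∑ q ∈ Icc 1 (k-1), ((if Odd q then (3:ℚ) else -1) * a (k-q) q) * Z (k-q) q
        = ∑ q ∈ Icc 1 (k-1), (nu q - ∑ p ∈ Icc 1 (k-1),
            (((q-1).choose (p-1) : ℕ):ℚ) * nu p) * Z (k-q) q := by
      apply Finset.sum_congr rfl; intro q hq; rw [KEY q hq]
    rw [hKk]
    have hsub : ∑ q ∈ Icc 1 (k-1), (nu q - ∑ p ∈ Icc 1 (k-1),
          (((q-1).choose (p-1) : ℕ):ℚ) * nu p) * Z (k-q) q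
        = (∑ q ∈ Icc 1 (k-1), nu q * Z (k-q) q)
          - ∑ q ∈ Icc 1 (k-1), (∑ p ∈ Icc 1 (k-1),
              (((q-1).choose (p-1) : ℕ):ℚ) * nu p) * Z (k-q) q := by
      rw [← Finset.sum_sub_distrib]
      apply Finset.sum_congr rfl; intro q _; ring
    rw [hsub]
    linear_combination hfinal
  -- reindex the goal sums
  have hodd : ∑ r ∈ (Icc 1 (k-1)).filter (fun r => Odd r ∧ Odd (k - r)),
        a r (k-r) * Z r (k-r)
      = ∑ q ∈ Icc 1 (k-1), (if Odd q then a (k-q) q * Z (k-q) q else 0) := by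
    rw [Finset.sum_filter]
    rw [sum_reflect (by omega)
      (fun r => if Odd r ∧ Odd (k-r) then a r (k-r) * Z r (k-r) else 0)]
    apply Finset.sum_congr rfl
    intro q hq
    obtain ⟨h1, h2⟩ := Finset.mem_Icc.mp hq
    rw [show k-(k-q) = q from by omega]
    by_cases hO : Odd q
    · rw [if_pos ⟨Nat.Even.sub_odd (by omega) hke hO, hO⟩, if_pos hO]
    · rw [if_neg (fun hh => hO hh.2), if_neg hO]
  have heven : ∑ r ∈ (Icc 1 (k-1)).filter (fun r => Even r ∧ Even (k - r)),
        a r (k-r) * Z r (k-r)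
      = ∑ q ∈ Icc 1 (k-1), (if Even q then a (k-q) q * Z (k-q) q else 0) := by
    rw [Finset.sum_filter]
    rw [sum_reflect (by omega)
      (fun r => if Even r ∧ Even (k-r) then a r (k-r) * Z r (k-r) else 0)]
    apply Finset.sum_congr rfl
    intro q hq
    obtain ⟨h1, h2⟩ := Finset.mem_Icc.mp hq
    rw [show k-(k-q) = q from by omega]
    by_cases hE : Even q
    · rw [if_pos ⟨(Nat.even_sub (show q ≤ k from by omega)).mpr (iff_of_true hke hE), hE⟩, if_pos hE]
    · rw [if_neg (fun hh => hE hh.2), if_neg hE]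
  rw [hodd, heven]
  have h3 : 3 * (∑ q ∈ Icc 1 (k-1), (if Odd q then a (k-q) q * Z (k-q) q else 0))
      - (∑ q ∈ Icc 1 (k-1), (if Even q then a (k-q) q * Z (k-q) q else 0))
      = ∑ q ∈ Icc 1 (k-1), ((if Odd q then (3:ℚ) else -1) * a (k-q) q) * Z (k-q) q := by
    rw [Finset.mul_sum, ← Finset.sum_sub_distrib]
    apply Finset.sum_congr rfl
    intro q _
    by_cases hO : Odd q
    · have hE : ¬ Even q := by
        rw [← Nat.not_odd_iff_even]; exact fun h => h hO
      rw [if_pos hO, if_pos hO, if_neg hE]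
      ring
    · have hE : Even q := Nat.not_odd_iff_even.mp hO
      rw [if_neg hO, if_pos hE, if_neg hO]
      ring
  linear_combination h3 + hG - Zk * SUMKEY
end

section
/- Taking P = 145110 \cdot ( -(36/691)(X^{10} - Y^{10}) + X^2 Y^2 (X^2 - Y^2)^3 ) \in W_{10}^+ in the Gangl–Kaneko–Zagier theorem yields the following relation in the formal double zeta space D_{12}: 22680 Z_{1,11} + 13006 Z_{3,9} - 29145 Z_{5,7} - 35364 Z_{7,5} + 22680 Z_{9,3} = 7560 Z_{2,10} - 2114 Z_{4,8} - (42965/3) Z_{6,6} - 2114 Z_{8,4} + 7560 Z_{10,2} - 1382 Z_{12}. -/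
/-- The Gangl–Kaneko–Zagier relation in `D₁₂` attached to (a multiple of) the even
period polynomial of the discriminant cusp form `Δ`: in any realization `Z, Zk` of
the double shuffle relations in weight 12,
`22680 Z_{1,11} + 13006 Z_{3,9} - 29145 Z_{5,7} - 35364 Z_{7,5} + 22680 Z_{9,3}
 = 7560 Z_{2,10} - 2114 Z_{4,8} - (42965/3) Z_{6,6} - 2114 Z_{8,4} + 7560 Z_{10,2}
   - 1382 Z_{12}`. -/
theorem delta_relation_weight_twelve
    (Z : ℕ → ℕ → ℚ) (Zk : ℚ)
    (hrel : ∀ r s : ℕ, 1 ≤ r → 1 ≤ s → r + s = 12 →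
      Z r s + Z s r + Zk =
        ∑ p ∈ Finset.Icc 1 11,
          ((Nat.choose (p - 1) (r - 1) + Nat.choose (p - 1) (s - 1) : ℕ) : ℚ) * Z (12 - p) p) :
    22680 * Z 1 11 + 13006 * Z 3 9 - 29145 * Z 5 7 - 35364 * Z 7 5 + 22680 * Z 9 3 =
      7560 * Z 2 10 - 2114 * Z 4 8 - (42965 / 3) * Z 6 6 - 2114 * Z 8 4 + 7560 * Z 10 2
        - 1382 * Zk := by
  have h1 := hrel 1 11 (by norm_num) (by norm_num) rfl
  have h2 := hrel 2 10 (by norm_num) (by norm_num) rfl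
  have h3 := hrel 3 9 (by norm_num) (by norm_num) rfl
  have h4 := hrel 4 8 (by norm_num) (by norm_num) rfl
  have h5 := hrel 5 7 (by norm_num) (by norm_num) rfl
  have h6 := hrel 6 6 (by norm_num) (by norm_num) rfl
  norm_num [Finset.sum_Icc_succ_top, Nat.choose] at h1 h2 h3 h4 h5 h6
  -- The relation for `(s, r)` coincides with that for `(r, s)`, so these six are all of them;
  -- the multipliers solve the linear system matching the coefficients of the target.
  linear_combination 7560 * h1 - 15120 * h2 + (35686 / 3) * h3 + 4228 * h4 - 21503 * h5
    + (42965 / 3) * h6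
end

section
/- In the formal double zeta space D_{11}, the relation 14 Z_{3,8} + 10 Z_{5,6} - 21 Z_{7,4} = -(3/2) Z_{11} holds; that is, this relation is a consequence of the double shuffle relations Z_{r,s}+Z_{s,r}+Z_{11} = \sum_{h+p=11} (binom(p-1,r-1)+binom(p-1,s-1)) Z_{h,p} for r+s=11, r,s \ge 1. -/
/-- In the formal double zeta space `D₁₁`: in any realization `Z, Zk` of the double
shuffle relations in weight 11, `14 Z_{3,8} + 10 Z_{5,6} - 21 Z_{7,4} = -(3/2) Z_{11}`. -/
theorem relation_weight_eleven
    (Z : ℕ → ℕ → ℚ) (Zk : ℚ)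
    (hrel : ∀ r s : ℕ, 1 ≤ r → 1 ≤ s → r + s = 11 →
      Z r s + Z s r + Zk =
        ∑ p ∈ Finset.Icc 1 10,
          ((Nat.choose (p - 1) (r - 1) + Nat.choose (p - 1) (s - 1) : ℕ) : ℚ) * Z (11 - p) p) :
    14 * Z 3 8 + 10 * Z 5 6 - 21 * Z 7 4 = -(3 / 2) * Zk := by
  have h38 := hrel 3 8 (by norm_num) (by norm_num) (by norm_num)
  have h47 := hrel 4 7 (by norm_num) (by norm_num) (by norm_num)
  have h56 := hrel 5 6 (by norm_num) (by norm_num) (by norm_num)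
  norm_num [Finset.sum_Icc_succ_top, Nat.choose] at h38 h47 h56
  linear_combination 7 * h38 - 21 / 2 * h47 + 5 * h56
end

section
/- In the formal double zeta space D_{13}, the relation 12 Z_{3,10} + 14 Z_{5,8} - 5 Z_{7,6} - 18 Z_{9,4} = -(3/2) Z_{13} holds as a consequence of the defining double shuffle relations. -/
/-- In the formal double zeta space `D₁₃`: in any realization `Z, Zk` of the double
shuffle relations in weight 13,
`12 Z_{3,10} + 14 Z_{5,8} - 5 Z_{7,6} - 18 Z_{9,4} = -(3/2) Z_{13}`. -/
theorem relation_weight_thirteen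
    (Z : ℕ → ℕ → ℚ) (Zk : ℚ)
    (hrel : ∀ r s : ℕ, 1 ≤ r → 1 ≤ s → r + s = 13 →
      Z r s + Z s r + Zk =
        ∑ p ∈ Finset.Icc 1 12,
          ((Nat.choose (p - 1) (r - 1) + Nat.choose (p - 1) (s - 1) : ℕ) : ℚ) * Z (13 - p) p) :
    12 * Z 3 10 + 14 * Z 5 8 - 5 * Z 7 6 - 18 * Z 9 4 = -(3 / 2) * Zk := by
  have h₃ := hrel 3 10 (by norm_num) (by norm_num) rfl
  have h₄ := hrel 4 9 (by norm_num) (by norm_num) rfl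
  have h₅ := hrel 5 8 (by norm_num) (by norm_num) rfl
  have h₆ := hrel 6 7 (by norm_num) (by norm_num) rfl
  norm_num [Finset.sum_Icc_succ_top, Nat.choose] at h₃ h₄ h₅ h₆
  linear_combination 6 * h₃ - 9 * h₄ + 7 * h₅ - (5 / 2) * h₆
end

section
/- For k \ge 3, the values \hat{\zeta}(r,s) = \sum_{0<m<n} 1/((m+n)^r n^s) (for r \ge 1, s \ge 2) satisfy \hat{\zeta}(r,s) = 2^{s-1} ( Li(1,-1; r,s) + \zeta(r,s) ) - \zeta(r,s) - \zeta(r+s), where Li(z_1, z_2; k_1, k_2) = \sum_{0<m_1<m_2} z_1^{m_1} z_2^{m_2} / (m_1^{k_1} m_2^{k_2}). -/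
/-- Bachmann's double zeta value `ζ̂(r,s) = ∑_{0<m<n} 1/((m+n)^r n^s)`. -/
noncomputable def hzeta (r s : ℕ) : ℝ :=
  ∑' p : ℕ × ℕ,
    if 0 < p.1 ∧ p.1 < p.2 then (((p.1 : ℝ) + (p.2 : ℝ)) ^ r * (p.2 : ℝ) ^ s)⁻¹ else 0

/-- The double polylogarithm value
`Li(z₁,z₂; k₁,k₂) = ∑_{0<m₁<m₂} z₁^{m₁} z₂^{m₂} / (m₁^{k₁} m₂^{k₂})`. -/
noncomputable def Li2 (z₁ z₂ : ℝ) (k₁ k₂ : ℕ) : ℝ :=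
  ∑' p : ℕ × ℕ,
    if 0 < p.1 ∧ p.1 < p.2 then z₁ ^ p.1 * z₂ ^ p.2 / ((p.1 : ℝ) ^ k₁ * (p.2 : ℝ) ^ k₂) else 0

namespace HzetaAux

noncomputable def M (r s : ℕ) (p : ℕ × ℕ) : ℝ :=
  if 0 < p.1 ∧ p.1 < 2 * p.2 then ((p.1 : ℝ) ^ r * (p.2 : ℝ) ^ s)⁻¹ else 0

noncomputable def D (r s : ℕ) (p : ℕ × ℕ) : ℝ :=
  if 0 < p.1 ∧ p.1 < p.2 then ((p.1 : ℝ) ^ r * (p.2 : ℝ) ^ s)⁻¹ else 0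

noncomputable def Dg (r s : ℕ) (p : ℕ × ℕ) : ℝ :=
  if 0 < p.1 ∧ p.1 = p.2 then ((p.1 : ℝ) ^ r * (p.2 : ℝ) ^ s)⁻¹ else 0

noncomputable def T (r s : ℕ) (p : ℕ × ℕ) : ℝ :=
  if p.2 < p.1 ∧ p.1 < 2 * p.2 then ((p.1 : ℝ) ^ r * (p.2 : ℝ) ^ s)⁻¹ else 0

lemma M_nonneg (r s : ℕ) (p : ℕ × ℕ) : 0 ≤ M r s p := by
  unfold M; split_ifs <;> positivity

lemma M_eq (r s : ℕ) (p : ℕ × ℕ) : M r s p = D r s p + (Dg r s p + T r s p) := by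
  obtain ⟨m, n⟩ := p
  simp only [M, D, Dg, T]
  split_ifs <;> first | (exfalso; omega) | ring

lemma key_ineq (r s : ℕ) (hr : 1 ≤ r) (hs : 2 ≤ s) {m n : ℕ} (hm : 0 < m) (h2 : m < 2 * n) :
    ((m : ℝ) ^ r * (n : ℝ) ^ s)⁻¹ ≤ 3 * (((m : ℝ)) ^ ((3:ℝ)/2))⁻¹ * (((n : ℝ)) ^ ((3:ℝ)/2))⁻¹ := by
  have hn : 0 < n := by omega
  set x : ℝ := (m : ℝ) with hxdef
  set y : ℝ := (n : ℝ) with hydef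
  have hx : 1 ≤ x := Nat.one_le_cast.mpr hm
  have hy : 1 ≤ y := Nat.one_le_cast.mpr hn
  have hxy : x ≤ 2 * y := by
    have : (m : ℝ) ≤ (2 * n : ℕ) := by exact_mod_cast h2.le
    push_cast at this; linarith
  have hx0 : (0:ℝ) ≤ x := by linarith
  have hy0 : (0:ℝ) ≤ y := by linarith
  have h32 : ∀ z : ℝ, 0 ≤ z → z ^ ((3:ℝ)/2) = Real.sqrt (z ^ 3) := by
    intro z hz
    rw [show ((3:ℝ)/2) = ((3:ℕ):ℝ) * (1/2 : ℝ) by norm_num, Real.rpow_mul hz,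
      Real.rpow_natCast, Real.sqrt_eq_rpow]
  -- key polynomial bound
  have hpoly : x ^ 3 * y ^ 3 ≤ (3 * (x * y ^ 2)) ^ 2 := by nlinarith
  have hP : x ^ ((3:ℝ)/2) * y ^ ((3:ℝ)/2) ≤ 3 * (x * y ^ 2) := by
    rw [h32 x hx0, h32 y hy0, ← Real.sqrt_mul (by positivity)]
    calc Real.sqrt (x ^ 3 * y ^ 3) ≤ Real.sqrt ((3 * (x * y ^ 2)) ^ 2) :=
          Real.sqrt_le_sqrt hpoly
      _ = 3 * (x * y ^ 2) := Real.sqrt_sq (by positivity)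
  have hstep : x * y ^ 2 ≤ x ^ r * y ^ s := by
    have h1 : x ≤ x ^ r := le_self_pow₀ hx (by omega)
    have h2 : y ^ 2 ≤ y ^ s := pow_le_pow_right₀ hy hs
    calc x * y ^ 2 ≤ x ^ r * y ^ 2 := by nlinarith
      _ ≤ x ^ r * y ^ s := by
          have : (0:ℝ) ≤ x ^ r := by positivity
          nlinarith
  have hPpos : 0 < x ^ ((3:ℝ)/2) * y ^ ((3:ℝ)/2) := by positivity
  have h3 : x ^ ((3:ℝ)/2) * y ^ ((3:ℝ)/2) / 3 ≤ x ^ r * y ^ s := by linarith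
  have h4 := inv_anti₀ (by positivity : (0:ℝ) < x ^ ((3:ℝ)/2) * y ^ ((3:ℝ)/2) / 3) h3
  calc (x ^ r * y ^ s)⁻¹ ≤ (x ^ ((3:ℝ)/2) * y ^ ((3:ℝ)/2) / 3)⁻¹ := h4
    _ = 3 * (x ^ ((3:ℝ)/2))⁻¹ * (y ^ ((3:ℝ)/2))⁻¹ := by
        rw [inv_div]; field_simp

lemma M_summable (r s : ℕ) (hr : 1 ≤ r) (hs : 2 ≤ s) : Summable (M r s) := by
  have hb : Summable (fun p : ℕ × ℕ =>
      (((p.1:ℝ)) ^ ((3:ℝ)/2))⁻¹ * (((p.2:ℝ)) ^ ((3:ℝ)/2))⁻¹) := by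
    have h1 : Summable (fun n : ℕ => (((n:ℝ)) ^ ((3:ℝ)/2))⁻¹) :=
      Real.summable_nat_rpow_inv.mpr (by norm_num)
    exact h1.mul_of_nonneg h1 (fun n => by positivity) (fun n => by positivity)
  apply Summable.of_nonneg_of_le (M_nonneg r s) _ (hb.mul_left 3)
  intro p
  obtain ⟨m, n⟩ := p
  simp only [M]
  split_ifs with h
  · exact (key_ineq r s hr hs h.1 h.2).trans_eq (by ring)
  · positivity


lemma le_M_of_piece (r s : ℕ) {f : ℕ × ℕ → ℝ}
    (h : ∀ p, f p = 0 ∨ f p = M r s p) (hM : Summable (M r s)) : Summable f := by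
  apply Summable.of_nonneg_of_le _ _ hM
  · intro p
    rcases h p with h' | h' <;> rw [h'] <;> first | exact le_refl _ | exact M_nonneg r s p
  · intro p
    rcases h p with h' | h' <;> rw [h'] <;> first | exact le_refl _ | exact M_nonneg r s p

lemma D_le (r s : ℕ) (p : ℕ × ℕ) : D r s p = 0 ∨ D r s p = M r s p := by
  obtain ⟨m, n⟩ := p
  simp only [D, M]
  split_ifs <;> first | (exfalso; omega) | (left; rfl) | (right; rfl)

lemma Dg_le (r s : ℕ) (p : ℕ × ℕ) : Dg r s p = 0 ∨ Dg r s p = M r s p := by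
  obtain ⟨m, n⟩ := p
  simp only [Dg, M]
  split_ifs <;> first | (exfalso; omega) | (left; rfl) | (right; rfl)

lemma T_le (r s : ℕ) (p : ℕ × ℕ) : T r s p = 0 ∨ T r s p = M r s p := by
  obtain ⟨m, n⟩ := p
  simp only [T, M]
  split_ifs <;> first | (exfalso; omega) | (left; rfl) | (right; rfl)

/-- the map realizing `T` as `hzeta`'s index set -/
def i : ℕ × ℕ → ℕ × ℕ := fun p => (p.1 + p.2, p.2)

lemma i_inj : Function.Injective i := by
  intro ⟨a, b⟩ ⟨c, d⟩ h
  simp only [i, Prod.mk.injEq] at h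
  obtain ⟨h1, h2⟩ := h
  exact Prod.ext (by omega) h2

lemma T_comp_i (r s : ℕ) (p : ℕ × ℕ) :
    T r s (i p) =
      if 0 < p.1 ∧ p.1 < p.2 then (((p.1 : ℝ) + (p.2 : ℝ)) ^ r * (p.2 : ℝ) ^ s)⁻¹ else 0 := by
  obtain ⟨m, n⟩ := p
  simp only [T, i]
  show (if n < m + n ∧ m + n < 2 * n then _ else 0) = _
  split_ifs <;> first | (exfalso; omega) | rfl | (push_cast; ring_nf)

lemma T_support (r s : ℕ) : Function.support (T r s) ⊆ Set.range i := by
  intro ⟨m, n⟩ hp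
  simp only [Function.mem_support, T] at hp
  by_cases h : n < m ∧ m < 2 * n
  · exact ⟨(m - n, n), by simp only [i]; exact Prod.ext (by omega) rfl⟩
  · simp [h] at hp

/-- the map realizing the even-second-coordinate sum -/
def j : ℕ × ℕ → ℕ × ℕ := fun p => (p.1, 2 * p.2)

lemma j_inj : Function.Injective j := by
  intro ⟨a, b⟩ ⟨c, d⟩ h
  simp only [j, Prod.mk.injEq] at h
  exact Prod.ext h.1 (by omega)

noncomputable def G (r s : ℕ) (p : ℕ × ℕ) : ℝ :=
  if 0 < p.1 ∧ p.1 < p.2 ∧ Even p.2 then 2 * ((p.1 : ℝ) ^ r * (p.2 : ℝ) ^ s)⁻¹ else 0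

lemma G_support (r s : ℕ) : Function.support (G r s) ⊆ Set.range j := by
  intro ⟨m, n⟩ hp
  simp only [Function.mem_support, G] at hp
  by_cases h : 0 < m ∧ m < n ∧ Even n
  · obtain ⟨k, hk⟩ := h.2.2
    exact ⟨(m, k), by simp only [j]; exact Prod.ext rfl (by omega)⟩
  · simp [h] at hp

lemma G_comp_j (r s : ℕ) (p : ℕ × ℕ) :
    G r s (j p) = (2 * ((2:ℝ) ^ s)⁻¹) * M r s p := by
  obtain ⟨m, n⟩ := p
  simp only [G, j, M]
  show (if 0 < m ∧ m < 2 * n ∧ Even (2 * n) then _ else 0) = _ * (if 0 < m ∧ m < 2 * n then _ else 0)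
  split_ifs with h1 h2 h2
  · have : ((2 * n : ℕ) : ℝ) ^ s = 2 ^ s * (n : ℝ) ^ s := by push_cast; rw [mul_pow]
    rw [this, mul_inv]
    ring
  · exfalso
    rcases h1 with ⟨ha, hb, -⟩
    exact h2 ⟨ha, by omega⟩
  · exfalso
    exact h1 ⟨h2.1, by omega, even_two_mul n⟩
  · ring

lemma G_le (r s : ℕ) (p : ℕ × ℕ) : G r s p ≤ 2 * M r s p ∧ 0 ≤ G r s p := by
  obtain ⟨m, n⟩ := p
  simp only [G, M]
  constructor
  · split_ifs with h1 h2 h2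
    · exact le_refl _
    · exfalso; omega
    · positivity
    · simp
  · split_ifs with h1
    · positivity
    · exact le_refl _

lemma G_summable (r s : ℕ) (hM : Summable (M r s)) : Summable (G r s) :=
  Summable.of_nonneg_of_le (fun p => (G_le r s p).2) (fun p => (G_le r s p).1) (hM.mul_left 2)


def dg : ℕ → ℕ × ℕ := fun n => (n, n)

lemma dg_inj : Function.Injective dg := fun a b h => (Prod.mk.injEq _ _ _ _ ▸ h).1

lemma Dg_support (r s : ℕ) : Function.support (Dg r s) ⊆ Set.range dg := by
  intro ⟨m, n⟩ hp
  simp only [Function.mem_support, Dg] at hp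
  by_cases h : 0 < m ∧ m = n
  · exact ⟨m, by simp only [dg]; exact Prod.ext rfl h.2⟩
  · simp [h] at hp

lemma Dg_comp_dg (r s : ℕ) (n : ℕ) :
    Dg r s (dg n) = if 0 < n then ((n : ℝ) ^ (r + s))⁻¹ else 0 := by
  rcases Nat.eq_zero_or_pos n with h | h
  · simp [Dg, dg, h]
  · simp [Dg, dg, h, pow_add]

end HzetaAux

open HzetaAux in
theorem hzeta_eq' (r s : ℕ) (hr : 1 ≤ r) (hs : 2 ≤ s) :
    (∑' p : ℕ × ℕ, T r s p) =
      2 ^ (s - 1) * ((∑' p : ℕ × ℕ,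
        if 0 < p.1 ∧ p.1 < p.2 then (1:ℝ) ^ p.1 * (-1:ℝ) ^ p.2 / ((p.1 : ℝ) ^ r * (p.2 : ℝ) ^ s) else 0)
        + ∑' p : ℕ × ℕ, D r s p) - (∑' p : ℕ × ℕ, D r s p) - ∑' n : ℕ, (if 0 < n then ((n : ℝ) ^ (r+s))⁻¹ else 0) := by
  set L : ℕ × ℕ → ℝ := fun p =>
    if 0 < p.1 ∧ p.1 < p.2 then (1:ℝ) ^ p.1 * (-1:ℝ) ^ p.2 / ((p.1 : ℝ) ^ r * (p.2 : ℝ) ^ s) else 0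
    with hLdef
  have hM : Summable (M r s) := M_summable r s hr hs
  have hD : Summable (D r s) := le_M_of_piece r s (D_le r s) hM
  have hDg : Summable (Dg r s) := le_M_of_piece r s (Dg_le r s) hM
  have hT : Summable (T r s) := le_M_of_piece r s (T_le r s) hM
  have habs : ∀ p, |L p| = D r s p := by
    intro ⟨m, n⟩
    simp only [hLdef, D]
    split_ifs with h
    · rw [one_pow, one_mul, abs_div, abs_pow, abs_neg, abs_one, one_pow, one_div,
        abs_of_nonneg (by positivity : (0:ℝ) ≤ (m:ℝ) ^ r * (n:ℝ) ^ s)]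
    · exact abs_zero
  have hL : Summable L := by
    apply Summable.of_abs
    rw [show (fun p => |L p|) = D r s from funext habs]
    exact hD
  have key1 : ∀ p, L p + D r s p = G r s p := by
    intro ⟨m, n⟩
    simp only [hLdef, D, G]
    by_cases hc : 0 < m ∧ m < n
    · by_cases he : Even n
      · rw [if_pos hc, if_pos hc, if_pos ⟨hc.1, hc.2, he⟩, he.neg_one_pow]
        ring
      · rw [if_pos hc, if_pos hc, if_neg (by tauto),
          (Nat.not_even_iff_odd.mp he).neg_one_pow]
        ring
    · rw [if_neg hc, if_neg hc, if_neg (by tauto), add_zero]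
  have hsumG : (∑' p, L p) + (∑' p, D r s p) = ∑' p, G r s p := by
    rw [← Summable.tsum_add hL hD]
    exact tsum_congr key1
  have hGM : (∑' p, G r s p) = (2 * ((2:ℝ) ^ s)⁻¹) * ∑' p, M r s p := by
    rw [← j_inj.tsum_eq (G_support r s)]
    rw [tsum_congr (G_comp_j r s)]
    exact tsum_mul_left
  have hMsplit : (∑' p, M r s p) =
      (∑' p, D r s p) + ((∑' p, Dg r s p) + (∑' p, T r s p)) := by
    rw [← Summable.tsum_add hDg hT, ← Summable.tsum_add hD (hDg.add hT)]
    exact tsum_congr (M_eq r s)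
  have hDgs : (∑' p, Dg r s p) = ∑' n : ℕ, (if 0 < n then ((n : ℝ) ^ (r+s))⁻¹ else 0) := by
    rw [← dg_inj.tsum_eq (Dg_support r s)]
    exact tsum_congr (Dg_comp_dg r s)
  have h2s : (2:ℝ) ^ (s - 1) * (2 * ((2:ℝ) ^ s)⁻¹) = 1 := by
    rw [← mul_assoc, ← pow_succ]
    have hss : s - 1 + 1 = s := by omega
    rw [hss]
    exact mul_inv_cancel₀ (pow_ne_zero s two_ne_zero)
  have hfin : (2:ℝ) ^ (s - 1) * ((∑' p, L p) + ∑' p, D r s p) = ∑' p, M r s p := by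
    rw [hsumG, hGM, ← mul_assoc, h2s, one_mul]
  rw [hfin, hMsplit, ← hDgs]
  ring

/-- `ζ̂(r,s) = 2^{s-1} ( Li(1,-1; r,s) + ζ(r,s) ) - ζ(r,s) - ζ(r+s)` for `r ≥ 1`, `s ≥ 2`. -/
theorem hzeta_eq (r s : ℕ) (hr : 1 ≤ r) (hs : 2 ≤ s) :
    hzeta r s =
      2 ^ (s - 1) * (Li2 1 (-1) r s + dzeta r s) - dzeta r s - szeta (r + s) := by
  have hD' : dzeta r s = ∑' p : ℕ × ℕ, HzetaAux.D r s p := rfl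
  have hL' : Li2 1 (-1) r s = ∑' p : ℕ × ℕ,
      (if 0 < p.1 ∧ p.1 < p.2 then (1:ℝ) ^ p.1 * (-1:ℝ) ^ p.2 / ((p.1 : ℝ) ^ r * (p.2 : ℝ) ^ s) else 0) := rfl
  have hs' : szeta (r + s) = ∑' n : ℕ, (if 0 < n then ((n : ℝ) ^ (r+s))⁻¹ else 0) := rfl
  have hT' : hzeta r s = ∑' p : ℕ × ℕ, HzetaAux.T r s p := by
    rw [← HzetaAux.i_inj.tsum_eq (HzetaAux.T_support r s)]
    exact (tsum_congr (HzetaAux.T_comp_i r s)).symm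
  rw [hD', hL', hs', hT']
  exact hzeta_eq' r s hr hs
end
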